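/- arXiv:1905.13341 — 8 statements merged into one kernel-verified Lean document; each statement's English description precedes it below -/
import Mathlib

section
/- (Boundary-invariant CB guarantee.) In a contextual bandit with finite state space S, finite action space A, context distribution d₀, reward distribution R(s,a) supported in [0, R_max], and finite function class F ⊂ (S×A → [0, V_max]): suppose (i) there exists C < ∞ such that for all f, f' ∈ F and every admissible distribution ν ∈ {d₀ × π_f : f ∈ F}, ‖f-f'‖²_μ ≤ C‖f-f'‖²_ν and ‖f-f'‖²_ν ≤ C‖f-f'‖²_μ; (ii) there exists f* ∈ F such that for all admissible ν, E_ν[f*(s,a)] = E_{(s,a)∼ν, r∼R(s,a)}[r], and for all f' ∈ F, L_μ(f') - L_μ(f*) = ‖f'-f*‖²_μ. If f̂ ∈ F satisfies L_μ(f̂) - min_{f∈F} L_μ(f) ≤ ε, then v^{π_{f̂}} ≥ v^{π_{f*}} - 2√(Cε). -/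
lemma cs_aux {S : Type*} [Fintype S] (d0 : S → ℝ) (hd0 : ∀ s, 0 ≤ d0 s)
    (hd01 : ∑ s, d0 s = 1) (x : S → ℝ) :
    ∑ s, d0 s * x s ≤ Real.sqrt (∑ s, d0 s * (x s) ^ 2) := by
  have h := Finset.sum_mul_sq_le_sq_mul_sq Finset.univ
      (fun s => Real.sqrt (d0 s)) (fun s => Real.sqrt (d0 s) * x s)
  have e1 : ∀ s : S, Real.sqrt (d0 s) * (Real.sqrt (d0 s) * x s) = d0 s * x s := by
    intro s; rw [← mul_assoc, Real.mul_self_sqrt (hd0 s)]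
  have e2 : ∀ s : S, Real.sqrt (d0 s) ^ 2 = d0 s := fun s => Real.sq_sqrt (hd0 s)
  have e3 : ∀ s : S, (Real.sqrt (d0 s) * x s) ^ 2 = d0 s * (x s) ^ 2 := by
    intro s; rw [mul_pow, e2]
  simp only [e1, e2, e3, hd01, one_mul] at h
  calc ∑ s, d0 s * x s ≤ |∑ s, d0 s * x s| := le_abs_self _
    _ = Real.sqrt ((∑ s, d0 s * x s) ^ 2) := (Real.sqrt_sq_eq_abs _).symm
    _ ≤ Real.sqrt (∑ s, d0 s * (x s) ^ 2) := Real.sqrt_le_sqrt h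

/-- Boundary-invariant contextual bandit guarantee (Theorem 4.1). -/
theorem stmt5 {S A Ω : Type*} [Fintype S] [Fintype A] [Fintype Ω]
    (d0 : S → ℝ) (hd0 : ∀ s, 0 ≤ d0 s) (hd01 : ∑ s, d0 s = 1)
    (ρ : Ω → ℝ) (hρ : ∀ ω, 0 ≤ ρ ω) (hρ1 : ∑ ω, ρ ω = 1)
    (Rmax : ℝ) (rew : S → A → Ω → ℝ)
    (hrew : ∀ s a ω, 0 ≤ rew s a ω ∧ rew s a ω ≤ Rmax)
    (μ : S → A → ℝ) (hμ : ∀ s a, 0 ≤ μ s a) (hμ1 : ∑ s, ∑ a, μ s a = 1)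
    (Vmax : ℝ) (F : Finset (S → A → ℝ))
    (hFrange : ∀ f ∈ F, ∀ s a, 0 ≤ f s a ∧ f s a ≤ Vmax)
    -- greedy-policy selector: `gre f s` is an argmax of `f s`
    (gre : (S → A → ℝ) → S → A)
    (hgre : ∀ (f : S → A → ℝ) (s : S) (a : A), f s a ≤ f s (gre f s))
    (C ε : ℝ) (hε : 0 ≤ ε)
    -- (i) μ and every admissible ν = d0 × π_g (g ∈ F) dominate each other up to C
    (hexp1 : ∀ f ∈ F, ∀ f' ∈ F, ∀ g ∈ F,
      ∑ s, ∑ a, μ s a * (f s a - f' s a) ^ 2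
        ≤ C * ∑ s, d0 s * (f s (gre g s) - f' s (gre g s)) ^ 2)
    (hexp2 : ∀ f ∈ F, ∀ f' ∈ F, ∀ g ∈ F,
      ∑ s, d0 s * (f s (gre g s) - f' s (gre g s)) ^ 2
        ≤ C * ∑ s, ∑ a, μ s a * (f s a - f' s a) ^ 2)
    -- (ii) f* is a valid reward function w.r.t. F
    (fstar : S → A → ℝ) (hfstarF : fstar ∈ F)
    (hvalid : ∀ g ∈ F,
      ∑ s, d0 s * fstar s (gre g s)
        = ∑ s, ∑ ω, d0 s * ρ ω * rew s (gre g s) ω)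
    (hloss : ∀ f' ∈ F,
      (∑ s, ∑ a, ∑ ω, μ s a * ρ ω * (f' s a - rew s a ω) ^ 2)
        - (∑ s, ∑ a, ∑ ω, μ s a * ρ ω * (fstar s a - rew s a ω) ^ 2)
        = ∑ s, ∑ a, μ s a * (f' s a - fstar s a) ^ 2)
    -- f̂ approximately minimizes the population loss over F
    (fhat : S → A → ℝ) (hfhatF : fhat ∈ F)
    (hopt : ∀ f ∈ F,
      (∑ s, ∑ a, ∑ ω, μ s a * ρ ω * (fhat s a - rew s a ω) ^ 2)
        ≤ (∑ s, ∑ a, ∑ ω, μ s a * ρ ω * (f s a - rew s a ω) ^ 2) + ε) :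
    (∑ s, ∑ ω, d0 s * ρ ω * rew s (gre fhat s) ω)
      ≥ (∑ s, ∑ ω, d0 s * ρ ω * rew s (gre fstar s) ω) - 2 * Real.sqrt (C * ε) := by
  set D := ∑ s, ∑ a, μ s a * (fhat s a - fstar s a) ^ 2 with hD
  have hD0 : 0 ≤ D := by
    apply Finset.sum_nonneg; intro s _; apply Finset.sum_nonneg; intro a _
    exact mul_nonneg (hμ s a) (sq_nonneg _)
  have hDε : D ≤ ε := by
    have h1 := hloss fhat hfhatF
    have h2 := hopt fstar hfstarF
    linarith
  -- bound on ν-norms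
  have hT : ∀ g ∈ F, ∑ s, d0 s * (fstar s (gre g s) - fhat s (gre g s)) ^ 2 ≤ C * D := by
    intro g hg
    have h := hexp2 fstar hfstarF fhat hfhatF g hg
    have heq : ∑ s, ∑ a, μ s a * (fstar s a - fhat s a) ^ 2 = D := by
      rw [hD]; refine Finset.sum_congr rfl fun s _ => Finset.sum_congr rfl fun a _ => by ring
    rwa [heq] at h
  have hsq : ∀ g ∈ F,
      Real.sqrt (∑ s, d0 s * (fstar s (gre g s) - fhat s (gre g s)) ^ 2)
        ≤ Real.sqrt (C * ε) := by
    intro g hg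
    rcases le_or_gt 0 C with hC | hC
    · exact Real.sqrt_le_sqrt ((hT g hg).trans (by nlinarith))
    · have hT0 : (0:ℝ) ≤ ∑ s, d0 s * (fstar s (gre g s) - fhat s (gre g s)) ^ 2 :=
        Finset.sum_nonneg fun s _ => mul_nonneg (hd0 s) (sq_nonneg _)
      have : ∑ s, d0 s * (fstar s (gre g s) - fhat s (gre g s)) ^ 2 = 0 := by
        have := hT g hg; nlinarith
      rw [this, Real.sqrt_zero]; exact Real.sqrt_nonneg _
  -- term A1
  have hA1 : ∑ s, d0 s * (fstar s (gre fstar s) - fhat s (gre fstar s))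
      ≤ Real.sqrt (C * ε) :=
    (cs_aux d0 hd0 hd01 _).trans (hsq fstar hfstarF)
  -- term A3
  have hA3 : ∑ s, d0 s * (fhat s (gre fhat s) - fstar s (gre fhat s))
      ≤ Real.sqrt (C * ε) := by
    refine le_trans ?_ (hsq fhat hfhatF)
    refine (cs_aux d0 hd0 hd01 _).trans (le_of_eq ?_)
    congr 1
    exact Finset.sum_congr rfl fun s _ => by ring
  -- term A2
  have hA2 : ∑ s, d0 s * (fhat s (gre fstar s) - fhat s (gre fhat s)) ≤ 0 := by
    apply Finset.sum_nonpos; intro s _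
    exact mul_nonpos_of_nonneg_of_nonpos (hd0 s) (by linarith [hgre fhat s (gre fstar s)])
  have hv1 := hvalid fhat hfhatF
  have hv2 := hvalid fstar hfstarF
  have hsplit : (∑ s, d0 s * fstar s (gre fstar s)) - (∑ s, d0 s * fstar s (gre fhat s))
      = (∑ s, d0 s * (fstar s (gre fstar s) - fhat s (gre fstar s)))
      + (∑ s, d0 s * (fhat s (gre fstar s) - fhat s (gre fhat s)))
      + (∑ s, d0 s * (fhat s (gre fhat s) - fstar s (gre fhat s))) := by
    rw [← Finset.sum_add_distrib, ← Finset.sum_add_distrib, ← Finset.sum_sub_distrib]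
    exact Finset.sum_congr rfl fun s _ => by ring
  linarith
end

section
/- (Classical CB guarantee.) In a contextual bandit with finite S, A, context distribution d₀, rewards in [0, R_max], data distribution μ = d₀ × π_b with π_b(a|s) ≥ 1/C for all s,a, and Q*(s,a) := E[r|s,a] ∈ F: if f̂ satisfies L_μ(f̂) - min_{f∈F} L_μ(f) ≤ ε, then v^{π_{f̂}} ≥ v* - 2√(Cε), where v* = E_{s∼d₀}[max_a Q*(s,a)]. -/
/-- Classical contextual bandit guarantee (Theorem 3.1). -/
theorem stmt6 {S A Ω : Type*} [Fintype S] [Fintype A] [Nonempty A] [Fintype Ω]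
    (d0 : S → ℝ) (hd0 : ∀ s, 0 ≤ d0 s) (hd01 : ∑ s, d0 s = 1)
    (ρ : Ω → ℝ) (hρ : ∀ ω, 0 ≤ ρ ω) (hρ1 : ∑ ω, ρ ω = 1)
    (Rmax : ℝ) (rew : S → A → Ω → ℝ)
    (hrew : ∀ s a ω, 0 ≤ rew s a ω ∧ rew s a ω ≤ Rmax)
    (πb : S → A → ℝ) (hπb : ∀ s, (∀ a, 0 ≤ πb s a) ∧ ∑ a, πb s a = 1)
    (C : ℝ) (hC : 0 < C) (hexp : ∀ s a, 1 / C ≤ πb s a)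
    (Qstar : S → A → ℝ) (hQstar : ∀ s a, Qstar s a = ∑ ω, ρ ω * rew s a ω)
    (F : Finset (S → A → ℝ)) (hreal : Qstar ∈ F)
    (gre : (S → A → ℝ) → S → A)
    (hgre : ∀ (f : S → A → ℝ) (s : S) (a : A), f s a ≤ f s (gre f s))
    (ε : ℝ) (hε : 0 ≤ ε)
    (fhat : S → A → ℝ) (hfhatF : fhat ∈ F)
    (hopt : ∀ f ∈ F,
      (∑ s, ∑ a, ∑ ω, (d0 s * πb s a) * ρ ω * (fhat s a - rew s a ω) ^ 2)
        ≤ (∑ s, ∑ a, ∑ ω, (d0 s * πb s a) * ρ ω * (f s a - rew s a ω) ^ 2) + ε) :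
    (∑ s, d0 s * Qstar s (gre fhat s))
      ≥ (∑ s, d0 s * Finset.univ.sup' Finset.univ_nonempty (Qstar s))
        - 2 * Real.sqrt (C * ε) := by
  classical
  set Δ : S → A → ℝ := fun s a => fhat s a - Qstar s a with hΔdef
  -- expansion of the quadratic loss at a fixed (s,a)
  have expand : ∀ (s : S) (a : A) (x : ℝ),
      ∑ ω, (d0 s * πb s a) * ρ ω * (x - rew s a ω) ^ 2
        = (d0 s * πb s a) * x ^ 2 - 2 * (d0 s * πb s a) * x * Qstar s a
          + (d0 s * πb s a) * ∑ ω, ρ ω * (rew s a ω) ^ 2 := by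
    intro s a x
    have h1 : ∑ ω, ρ ω * rew s a ω = Qstar s a := (hQstar s a).symm
    have : ∀ ω : Ω, (d0 s * πb s a) * ρ ω * (x - rew s a ω) ^ 2
        = ((d0 s * πb s a) * x ^ 2) * ρ ω
          - (2 * (d0 s * πb s a) * x) * (ρ ω * rew s a ω)
          + (d0 s * πb s a) * (ρ ω * (rew s a ω) ^ 2) := by
      intro ω; ring
    rw [Finset.sum_congr rfl (fun ω _ => this ω)]
    rw [Finset.sum_add_distrib, Finset.sum_sub_distrib, ← Finset.mul_sum,
      ← Finset.mul_sum, ← Finset.mul_sum, hρ1, h1]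
    ring
  -- Lemma A : excess loss equals weighted squared error
  have hA : ∑ s, ∑ a, d0 s * πb s a * (Δ s a) ^ 2 ≤ ε := by
    have h := hopt Qstar hreal
    have key : ∀ s a, ∑ ω, (d0 s * πb s a) * ρ ω * (fhat s a - rew s a ω) ^ 2
        = ∑ ω, (d0 s * πb s a) * ρ ω * (Qstar s a - rew s a ω) ^ 2
          + d0 s * πb s a * (Δ s a) ^ 2 := by
      intro s a
      rw [expand s a (fhat s a), expand s a (Qstar s a)]
      simp only [hΔdef]; ring
    have h2 : ∑ s, ∑ a, ∑ ω, (d0 s * πb s a) * ρ ω * (fhat s a - rew s a ω) ^ 2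
        = (∑ s, ∑ a, ∑ ω, (d0 s * πb s a) * ρ ω * (Qstar s a - rew s a ω) ^ 2)
          + ∑ s, ∑ a, d0 s * πb s a * (Δ s a) ^ 2 := by
      rw [← Finset.sum_add_distrib]
      refine Finset.sum_congr rfl fun s _ => ?_
      rw [← Finset.sum_add_distrib]
      exact Finset.sum_congr rfl fun a _ => key s a
    linarith [h2 ▸ h]
  have hΔsq_nonneg : ∀ (s : S) (a : A), (0:ℝ) ≤ d0 s * πb s a * (Δ s a) ^ 2 := by
    intro s a
    exact mul_nonneg (mul_nonneg (hd0 s) ((hπb s).1 a)) (sq_nonneg _)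
  -- Lemma B : for any selector g
  have hB : ∀ g : S → A, ∑ s, d0 s * (Δ s (g s)) ^ 2 ≤ C * ε := by
    intro g
    have h1 : ∑ s, d0 s * πb s (g s) * (Δ s (g s)) ^ 2 ≤ ε := by
      refine le_trans (Finset.sum_le_sum fun s _ => ?_) hA
      exact Finset.single_le_sum (f := fun a => d0 s * πb s a * (Δ s a) ^ 2)
        (fun a _ => hΔsq_nonneg s a) (Finset.mem_univ (g s))
    have h2 : ∑ s, d0 s * (Δ s (g s)) ^ 2
        ≤ C * ∑ s, d0 s * πb s (g s) * (Δ s (g s)) ^ 2 := by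
      rw [Finset.mul_sum]
      refine Finset.sum_le_sum fun s _ => ?_
      have hπ : 1 ≤ C * πb s (g s) := by
        have := hexp s (g s)
        calc (1:ℝ) = C * (1 / C) := by field_simp
        _ ≤ C * πb s (g s) := by
          exact mul_le_mul_of_nonneg_left this hC.le
      have hnn : 0 ≤ d0 s * (Δ s (g s)) ^ 2 := mul_nonneg (hd0 s) (sq_nonneg _)
      calc d0 s * (Δ s (g s)) ^ 2 = d0 s * (Δ s (g s)) ^ 2 * 1 := by ring
        _ ≤ d0 s * (Δ s (g s)) ^ 2 * (C * πb s (g s)) :=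
            mul_le_mul_of_nonneg_left hπ hnn
        _ = C * (d0 s * πb s (g s) * (Δ s (g s)) ^ 2) := by ring
    exact h2.trans (mul_le_mul_of_nonneg_left h1 hC.le)
  -- Lemma C : Cauchy–Schwarz
  have hCS : ∀ g : S → A, ∑ s, d0 s * |Δ s (g s)| ≤ Real.sqrt (C * ε) := by
    intro g
    have hsq : (∑ s, d0 s * |Δ s (g s)|) ^ 2 ≤ C * ε := by
      have cs2 : (∑ s, Real.sqrt (d0 s) * (Real.sqrt (d0 s) * |Δ s (g s)|)) ^ 2
          ≤ (∑ s, Real.sqrt (d0 s) ^ 2) * ∑ s, (Real.sqrt (d0 s) * |Δ s (g s)|) ^ 2 :=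
        Finset.sum_mul_sq_le_sq_mul_sq _ _ _
      have e1 : ∀ s : S, Real.sqrt (d0 s) * (Real.sqrt (d0 s) * |Δ s (g s)|)
          = d0 s * |Δ s (g s)| := by
        intro s
        rw [← mul_assoc, Real.mul_self_sqrt (hd0 s)]
      have e2 : ∀ s : S, Real.sqrt (d0 s) ^ 2 = d0 s := fun s => Real.sq_sqrt (hd0 s)
      have e3 : ∀ s : S, (Real.sqrt (d0 s) * |Δ s (g s)|) ^ 2
          = d0 s * (Δ s (g s)) ^ 2 := by
        intro s
        rw [mul_pow, Real.sq_sqrt (hd0 s), sq_abs]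
      rw [Finset.sum_congr rfl (fun s _ => e1 s), Finset.sum_congr rfl (fun s _ => e2 s),
        Finset.sum_congr rfl (fun s _ => e3 s), hd01, one_mul] at cs2
      exact cs2.trans (hB g)
    have hnn : 0 ≤ ∑ s, d0 s * |Δ s (g s)| :=
      Finset.sum_nonneg fun s _ => mul_nonneg (hd0 s) (abs_nonneg _)
    calc ∑ s, d0 s * |Δ s (g s)|
        = Real.sqrt ((∑ s, d0 s * |Δ s (g s)|) ^ 2) := (Real.sqrt_sq hnn).symm
      _ ≤ Real.sqrt (C * ε) := Real.sqrt_le_sqrt hsq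
  -- choose maximizers
  have hsup : ∀ s : S, ∃ a : A, Finset.univ.sup' Finset.univ_nonempty (Qstar s) = Qstar s a := by
    intro s
    obtain ⟨a, _, ha⟩ := Finset.exists_mem_eq_sup' Finset.univ_nonempty (Qstar s)
    exact ⟨a, ha⟩
  choose astar hastar using hsup
  -- per-state gap bound
  have hgap : ∀ s : S, d0 s * (Qstar s (astar s) - Qstar s (gre fhat s))
      ≤ d0 s * (|Δ s (astar s)| + |Δ s (gre fhat s)|) := by
    intro s
    refine mul_le_mul_of_nonneg_left ?_ (hd0 s)
    have h1 : fhat s (astar s) ≤ fhat s (gre fhat s) := hgre fhat s (astar s)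
    have h2 : -(Δ s (astar s)) ≤ |Δ s (astar s)| := neg_le_abs _
    have h3 : Δ s (gre fhat s) ≤ |Δ s (gre fhat s)| := le_abs_self _
    simp only [hΔdef] at h2 h3 ⊢
    linarith
  have hsum : ∑ s, d0 s * Qstar s (astar s) - ∑ s, d0 s * Qstar s (gre fhat s)
      ≤ 2 * Real.sqrt (C * ε) := by
    have h1 : ∑ s, d0 s * Qstar s (astar s) - ∑ s, d0 s * Qstar s (gre fhat s)
        = ∑ s, d0 s * (Qstar s (astar s) - Qstar s (gre fhat s)) := by
      rw [← Finset.sum_sub_distrib]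
      exact Finset.sum_congr rfl fun s _ => by ring
    have h2 : ∑ s, d0 s * (|Δ s (astar s)| + |Δ s (gre fhat s)|)
        = (∑ s, d0 s * |Δ s (astar s)|) + ∑ s, d0 s * |Δ s (gre fhat s)| := by
      rw [← Finset.sum_add_distrib]
      exact Finset.sum_congr rfl fun s _ => by ring
    have := Finset.sum_le_sum fun s (_ : s ∈ Finset.univ) => hgap s
    have hc1 := hCS astar
    have hc2 := hCS (gre fhat)
    rw [h1]
    linarith [h2 ▸ this]
  have hrw : ∑ s, d0 s * Finset.univ.sup' Finset.univ_nonempty (Qstar s)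
      = ∑ s, d0 s * Qstar s (astar s) :=
    Finset.sum_congr rfl fun s _ => by rw [hastar s]
  rw [ge_iff_le, hrw]
  linarith
end

section
/- (Robust classical CB guarantee.) In a contextual bandit with finite S, A, data distribution μ = d₀ × π_b satisfying π_b(a|s) ≥ 1/C for all s,a, define ε_approx := min_{f∈F} ‖f - Q*‖²_μ where Q*(s,a) = E[r|s,a]. If f̂ satisfies L_μ(f̂) - min_{f∈F} L_μ(f) ≤ ε, then v^{π_{f̂}} ≥ v* - 2√(C(ε + ε_approx)). -/
/-- Robust classical contextual bandit guarantee (Theorem 3.2). -/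
theorem stmt7 {S A Ω : Type*} [Fintype S] [Fintype A] [Nonempty A] [Fintype Ω]
    (d0 : S → ℝ) (hd0 : ∀ s, 0 ≤ d0 s) (hd01 : ∑ s, d0 s = 1)
    (ρ : Ω → ℝ) (hρ : ∀ ω, 0 ≤ ρ ω) (hρ1 : ∑ ω, ρ ω = 1)
    (Rmax : ℝ) (rew : S → A → Ω → ℝ)
    (hrew : ∀ s a ω, 0 ≤ rew s a ω ∧ rew s a ω ≤ Rmax)
    (πb : S → A → ℝ) (hπb : ∀ s, (∀ a, 0 ≤ πb s a) ∧ ∑ a, πb s a = 1)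
    (C : ℝ) (hC : 0 < C) (hexp : ∀ s a, 1 / C ≤ πb s a)
    (Qstar : S → A → ℝ) (hQstar : ∀ s a, Qstar s a = ∑ ω, ρ ω * rew s a ω)
    (F : Finset (S → A → ℝ))
    (gre : (S → A → ℝ) → S → A)
    (hgre : ∀ (f : S → A → ℝ) (s : S) (a : A), f s a ≤ f s (gre f s))
    (ε εapprox : ℝ) (hε : 0 ≤ ε)
    -- εapprox = min_{f ∈ F} ‖f - Q*‖²_μ
    (hlow : ∀ f ∈ F,
      εapprox ≤ ∑ s, ∑ a, (d0 s * πb s a) * (f s a - Qstar s a) ^ 2)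
    (hatt : ∃ f ∈ F,
      (∑ s, ∑ a, (d0 s * πb s a) * (f s a - Qstar s a) ^ 2) = εapprox)
    (fhat : S → A → ℝ) (hfhatF : fhat ∈ F)
    (hopt : ∀ f ∈ F,
      (∑ s, ∑ a, ∑ ω, (d0 s * πb s a) * ρ ω * (fhat s a - rew s a ω) ^ 2)
        ≤ (∑ s, ∑ a, ∑ ω, (d0 s * πb s a) * ρ ω * (f s a - rew s a ω) ^ 2) + ε) :
    (∑ s, d0 s * Qstar s (gre fhat s))
      ≥ (∑ s, d0 s * Finset.univ.sup' Finset.univ_nonempty (Qstar s))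
        - 2 * Real.sqrt (C * (ε + εapprox)) := by
  classical
  -- noise decomposition of the loss
  have hdec : ∀ f : S → A → ℝ,
      (∑ s, ∑ a, ∑ ω, (d0 s * πb s a) * ρ ω * (f s a - rew s a ω) ^ 2)
      = (∑ s, ∑ a, (d0 s * πb s a) * (f s a - Qstar s a) ^ 2)
        + ∑ s, ∑ a, ∑ ω, (d0 s * πb s a) * ρ ω * (Qstar s a - rew s a ω) ^ 2 := by
    intro f
    rw [← Finset.sum_add_distrib]
    refine Finset.sum_congr rfl fun s _ => ?_
    rw [← Finset.sum_add_distrib]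
    refine Finset.sum_congr rfl fun a _ => ?_
    have key : ∀ x : ℝ, (∑ ω, ρ ω * (x - rew s a ω) ^ 2)
        = x ^ 2 - 2 * x * Qstar s a + ∑ ω, ρ ω * rew s a ω ^ 2 := by
      intro x
      have : (∑ ω, ρ ω * (x - rew s a ω) ^ 2)
          = (∑ ω, ρ ω) * x ^ 2 - 2 * x * (∑ ω, ρ ω * rew s a ω)
            + ∑ ω, ρ ω * rew s a ω ^ 2 := by
        rw [Finset.sum_mul, Finset.mul_sum, ← Finset.sum_sub_distrib,
          ← Finset.sum_add_distrib]
        exact Finset.sum_congr rfl fun ω _ => by ring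
      rw [this, hρ1, ← hQstar s a]; ring
    have e1 : (∑ ω, (d0 s * πb s a) * ρ ω * (f s a - rew s a ω) ^ 2)
        = (d0 s * πb s a) * ∑ ω, ρ ω * (f s a - rew s a ω) ^ 2 := by
      rw [Finset.mul_sum]; exact Finset.sum_congr rfl fun ω _ => by ring
    have e2 : (∑ ω, (d0 s * πb s a) * ρ ω * (Qstar s a - rew s a ω) ^ 2)
        = (d0 s * πb s a) * ∑ ω, ρ ω * (Qstar s a - rew s a ω) ^ 2 := by
      rw [Finset.mul_sum]; exact Finset.sum_congr rfl fun ω _ => by ring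
    rw [e1, e2, key, key, ← mul_add]
    ring
  -- key excess-risk bound
  obtain ⟨f0, hf0F, hf0⟩ := hatt
  have hkey : (∑ s, ∑ a, (d0 s * πb s a) * (fhat s a - Qstar s a) ^ 2) ≤ ε + εapprox := by
    have h := hopt f0 hf0F
    rw [hdec fhat, hdec f0, hf0] at h
    linarith
  have hkey0 : 0 ≤ ε + εapprox := by
    have := hlow fhat hfhatF
    have hnn : (0:ℝ) ≤ ∑ s, ∑ a, (d0 s * πb s a) * (fhat s a - Qstar s a) ^ 2 := by
      apply Finset.sum_nonneg; intro s _
      apply Finset.sum_nonneg; intro a _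
      exact mul_nonneg (mul_nonneg (hd0 s) ((hπb s).1 a)) (sq_nonneg _)
    nlinarith [hlow f0 hf0F]
  have hkey0' : 0 ≤ C * (ε + εapprox) := mul_nonneg hC.le hkey0
  -- for any selection of actions, the weighted absolute error is small
  have hsel : ∀ sel : S → A,
      (∑ s, d0 s * |fhat s (sel s) - Qstar s (sel s)|) ≤ Real.sqrt (C * (ε + εapprox)) := by
    intro sel
    have hcs := Finset.sum_mul_sq_le_sq_mul_sq Finset.univ
      (fun s => Real.sqrt (d0 s))
      (fun s => Real.sqrt (d0 s) * |fhat s (sel s) - Qstar s (sel s)|)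
    have e1 : (∑ s, Real.sqrt (d0 s) * (Real.sqrt (d0 s) * |fhat s (sel s) - Qstar s (sel s)|))
        = ∑ s, d0 s * |fhat s (sel s) - Qstar s (sel s)| := by
      refine Finset.sum_congr rfl fun s _ => ?_
      rw [← mul_assoc, Real.mul_self_sqrt (hd0 s)]
    have e2 : (∑ s, Real.sqrt (d0 s) ^ 2) = 1 := by
      rw [← hd01]; exact Finset.sum_congr rfl fun s _ => Real.sq_sqrt (hd0 s)
    have e3 : (∑ s, (Real.sqrt (d0 s) * |fhat s (sel s) - Qstar s (sel s)|) ^ 2)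
        ≤ C * (ε + εapprox) := by
      have step : (∑ s, (Real.sqrt (d0 s) * |fhat s (sel s) - Qstar s (sel s)|) ^ 2)
          ≤ ∑ s, C * ∑ a, (d0 s * πb s a) * (fhat s a - Qstar s a) ^ 2 := by
        refine Finset.sum_le_sum fun s _ => ?_
        have h1 : (Real.sqrt (d0 s) * |fhat s (sel s) - Qstar s (sel s)|) ^ 2
            = d0 s * (fhat s (sel s) - Qstar s (sel s)) ^ 2 := by
          rw [mul_pow, Real.sq_sqrt (hd0 s), sq_abs]
        rw [h1]
        have h2 : d0 s * (fhat s (sel s) - Qstar s (sel s)) ^ 2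
            ≤ C * ((d0 s * πb s (sel s)) * (fhat s (sel s) - Qstar s (sel s)) ^ 2) := by
          have h3 : (1:ℝ) ≤ C * πb s (sel s) := by
            have := hexp s (sel s)
            rw [div_le_iff₀ hC] at this; linarith [mul_comm (πb s (sel s)) C]
          nlinarith [mul_nonneg (hd0 s) (sq_nonneg (fhat s (sel s) - Qstar s (sel s)))]
        refine h2.trans ?_
        apply mul_le_mul_of_nonneg_left _ hC.le
        exact Finset.single_le_sum (f := fun a => (d0 s * πb s a) * (fhat s a - Qstar s a) ^ 2)
          (fun a _ => mul_nonneg (mul_nonneg (hd0 s) ((hπb s).1 a)) (sq_nonneg _))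
          (Finset.mem_univ (sel s))
      calc _ ≤ ∑ s, C * ∑ a, (d0 s * πb s a) * (fhat s a - Qstar s a) ^ 2 := step
        _ = C * ∑ s, ∑ a, (d0 s * πb s a) * (fhat s a - Qstar s a) ^ 2 := by
            rw [Finset.mul_sum]
        _ ≤ C * (ε + εapprox) := mul_le_mul_of_nonneg_left hkey hC.le
    have hnnL : 0 ≤ ∑ s, d0 s * |fhat s (sel s) - Qstar s (sel s)| :=
      Finset.sum_nonneg fun s _ => mul_nonneg (hd0 s) (abs_nonneg _)
    have hsq : (∑ s, d0 s * |fhat s (sel s) - Qstar s (sel s)|) ^ 2 ≤ C * (ε + εapprox) := by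
      rw [← e1] at *
      calc (∑ s, Real.sqrt (d0 s) * (Real.sqrt (d0 s) * |fhat s (sel s) - Qstar s (sel s)|)) ^ 2
          ≤ (∑ s, Real.sqrt (d0 s) ^ 2) *
            ∑ s, (Real.sqrt (d0 s) * |fhat s (sel s) - Qstar s (sel s)|) ^ 2 := hcs
        _ ≤ C * (ε + εapprox) := by rw [e2, one_mul]; exact e3
    nlinarith [Real.sq_sqrt hkey0', Real.sqrt_nonneg (C * (ε + εapprox)), sq_nonneg ((∑ s, d0 s * |fhat s (sel s) - Qstar s (sel s)|) - Real.sqrt (C * (ε + εapprox)))]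
  -- choose a maximizing action per state
  choose astar hastar using fun s =>
    Finset.exists_mem_eq_sup' (Finset.univ_nonempty (α := A)) (Qstar s)
  -- per-state bound
  have hstate : ∀ s, Finset.univ.sup' Finset.univ_nonempty (Qstar s) - Qstar s (gre fhat s)
      ≤ |fhat s (astar s) - Qstar s (astar s)| + |fhat s (gre fhat s) - Qstar s (gre fhat s)| := by
    intro s
    have h1 : Finset.univ.sup' Finset.univ_nonempty (Qstar s) = Qstar s (astar s) :=
      (hastar s).2
    have h2 := hgre fhat s (astar s)
    have h3 : Qstar s (astar s) - fhat s (astar s) ≤ |fhat s (astar s) - Qstar s (astar s)| := by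
      rw [abs_sub_comm]; exact le_abs_self _
    have h4 : fhat s (gre fhat s) - Qstar s (gre fhat s)
        ≤ |fhat s (gre fhat s) - Qstar s (gre fhat s)| := le_abs_self _
    rw [h1]; linarith
  have hmain : (∑ s, d0 s * Finset.univ.sup' Finset.univ_nonempty (Qstar s))
      - (∑ s, d0 s * Qstar s (gre fhat s)) ≤ 2 * Real.sqrt (C * (ε + εapprox)) := by
    have step : (∑ s, d0 s * Finset.univ.sup' Finset.univ_nonempty (Qstar s))
        - (∑ s, d0 s * Qstar s (gre fhat s))
        ≤ (∑ s, d0 s * |fhat s (astar s) - Qstar s (astar s)|)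
          + ∑ s, d0 s * |fhat s (gre fhat s) - Qstar s (gre fhat s)| := by
      rw [← Finset.sum_sub_distrib, ← Finset.sum_add_distrib]
      refine Finset.sum_le_sum fun s _ => ?_
      rw [← mul_sub, ← mul_add]
      exact mul_le_mul_of_nonneg_left (hstate s) (hd0 s)
    have b1 := hsel astar
    have b2 := hsel (gre fhat)
    linarith
  linarith
end

section
/- (Superiority of boundary-invariant bound.) Under the assumptions of both the boundary-invariant CB theorem (with f* ∈ F a valid reward function w.r.t. F satisfying E_ν[f*] = E_ν[r] for all admissible ν and L_μ(f') - L_μ(f*) = ‖f'-f*‖²_μ for all f' ∈ F) and the classical exploratory assumption π_b(a|s) ≥ 1/C, with ε_approx := min_{f∈F}‖f-Q*‖²_μ and ε ≤ ε_approx/2, the boundary-invariant bound is at least as tight: v* - 2√(C(ε+ε_approx)) ≤ v^{π_{f*}} - 2√(Cε). -/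
/-- Algebraic step: `2√(Cε) + √(Cεa) ≤ 2√(C(ε+εa))` when `ε ≤ εa/2`. -/
lemma stmt8_alg (C ε εa : ℝ) (hC : 0 < C) (hε : 0 ≤ ε) (hεa : 0 ≤ εa)
    (hs : ε ≤ εa / 2) :
    2 * Real.sqrt (C * ε) + Real.sqrt (C * εa) ≤ 2 * Real.sqrt (C * (ε + εa)) := by
  have hx_nn : 0 ≤ Real.sqrt (C * ε) := Real.sqrt_nonneg _
  have hy_nn : 0 ≤ Real.sqrt (C * εa) := Real.sqrt_nonneg _
  have hz_nn : 0 ≤ Real.sqrt (C * (ε + εa)) := Real.sqrt_nonneg _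
  set x := Real.sqrt (C * ε)
  set y := Real.sqrt (C * εa)
  set z := Real.sqrt (C * (ε + εa))
  have hx2 : x ^ 2 = C * ε := Real.sq_sqrt (by positivity)
  have hy2 : y ^ 2 = C * εa := Real.sq_sqrt (by positivity)
  have hz2 : z ^ 2 = C * (ε + εa) := Real.sq_sqrt (by positivity)
  have hxy : 2 * x ^ 2 ≤ y ^ 2 := by rw [hx2, hy2]; nlinarith
  have hsq : (2 * x + y) ^ 2 ≤ (2 * z) ^ 2 := by nlinarith [sq_nonneg (2 * x - y)]
  have h1 : 2 * x + y = Real.sqrt ((2 * x + y) ^ 2) := (Real.sqrt_sq (by linarith)).symm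
  calc 2 * x + y = Real.sqrt ((2 * x + y) ^ 2) := h1
    _ ≤ Real.sqrt ((2 * z) ^ 2) := Real.sqrt_le_sqrt hsq
    _ = 2 * z := Real.sqrt_sq (by linarith)

/-- Superiority of the boundary-invariant bound (Proposition 4.1). -/
theorem stmt8 {S A Ω : Type*} [Fintype S] [Fintype A] [Nonempty A] [Fintype Ω]
    (d0 : S → ℝ) (hd0 : ∀ s, 0 ≤ d0 s) (hd01 : ∑ s, d0 s = 1)
    (ρ : Ω → ℝ) (hρ : ∀ ω, 0 ≤ ρ ω) (hρ1 : ∑ ω, ρ ω = 1)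
    (Rmax : ℝ) (rew : S → A → Ω → ℝ)
    (hrew : ∀ s a ω, 0 ≤ rew s a ω ∧ rew s a ω ≤ Rmax)
    (πb : S → A → ℝ) (hπb : ∀ s, (∀ a, 0 ≤ πb s a) ∧ ∑ a, πb s a = 1)
    (C : ℝ) (hC : 0 < C) (hexp : ∀ s a, 1 / C ≤ πb s a)
    (Qstar : S → A → ℝ) (hQstar : ∀ s a, Qstar s a = ∑ ω, ρ ω * rew s a ω)
    (F : Finset (S → A → ℝ))
    (gre : (S → A → ℝ) → S → A)
    (hgre : ∀ (f : S → A → ℝ) (s : S) (a : A), f s a ≤ f s (gre f s))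
    -- f* ∈ F is a valid reward function w.r.t. F:
    (fstar : S → A → ℝ) (hfstarF : fstar ∈ F)
    (hvalid : ∀ g ∈ F,
      ∑ s, d0 s * fstar s (gre g s)
        = ∑ s, ∑ ω, d0 s * ρ ω * rew s (gre g s) ω)
    (hloss : ∀ f' ∈ F,
      (∑ s, ∑ a, ∑ ω, (d0 s * πb s a) * ρ ω * (f' s a - rew s a ω) ^ 2)
        - (∑ s, ∑ a, ∑ ω, (d0 s * πb s a) * ρ ω * (fstar s a - rew s a ω) ^ 2)
        = ∑ s, ∑ a, (d0 s * πb s a) * (f' s a - fstar s a) ^ 2)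
    -- εapprox = min_{f ∈ F} ‖f - Q*‖²_μ
    (ε εapprox : ℝ) (hε : 0 ≤ ε)
    (hlow : ∀ f ∈ F,
      εapprox ≤ ∑ s, ∑ a, (d0 s * πb s a) * (f s a - Qstar s a) ^ 2)
    (hatt : ∃ f ∈ F,
      (∑ s, ∑ a, (d0 s * πb s a) * (f s a - Qstar s a) ^ 2) = εapprox)
    (hsmall : ε ≤ εapprox / 2) :
    (∑ s, d0 s * Finset.univ.sup' Finset.univ_nonempty (Qstar s))
        - 2 * Real.sqrt (C * (ε + εapprox))
      ≤ (∑ s, d0 s * Qstar s (gre fstar s)) - 2 * Real.sqrt (C * ε) := by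
  classical
  have hμ0 : ∀ s a, 0 ≤ d0 s * πb s a := fun s a => mul_nonneg (hd0 s) ((hπb s).1 a)
  -- pointwise expansion of the inner expectation
  have hpt : ∀ (x : ℝ) (s : S) (a : A),
      ∑ ω, ρ ω * (x - rew s a ω) ^ 2
        = x ^ 2 - 2 * x * Qstar s a + ∑ ω, ρ ω * (rew s a ω) ^ 2 := by
    intro x s a
    have h1 : ∑ ω, ρ ω * (x - rew s a ω) ^ 2
        = ∑ ω, (ρ ω * x ^ 2 - 2 * x * (ρ ω * rew s a ω) + ρ ω * (rew s a ω) ^ 2) :=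
      Finset.sum_congr rfl fun ω _ => by ring
    rw [h1, Finset.sum_add_distrib, Finset.sum_sub_distrib, ← Finset.sum_mul, ← Finset.mul_sum,
      hρ1, ← hQstar]
    ring
  -- rewriting the loss
  have hL : ∀ f : S → A → ℝ,
      (∑ s, ∑ a, ∑ ω, (d0 s * πb s a) * ρ ω * (f s a - rew s a ω) ^ 2)
        = ∑ s, ∑ a, (d0 s * πb s a) *
            ((f s a) ^ 2 - 2 * (f s a) * Qstar s a + ∑ ω, ρ ω * (rew s a ω) ^ 2) := by
    intro f
    refine Finset.sum_congr rfl fun s _ => Finset.sum_congr rfl fun a _ => ?_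
    rw [← hpt (f s a) s a, Finset.mul_sum]
    exact Finset.sum_congr rfl fun ω _ => by ring
  -- bias-variance: excess loss equals difference of squared distances to Q*
  have hdiff : ∀ f' ∈ F,
      (∑ s, ∑ a, (d0 s * πb s a) * (f' s a - Qstar s a) ^ 2)
        - (∑ s, ∑ a, (d0 s * πb s a) * (fstar s a - Qstar s a) ^ 2)
        = ∑ s, ∑ a, (d0 s * πb s a) * (f' s a - fstar s a) ^ 2 := by
    intro f' hf'
    have h := hloss f' hf'
    rw [hL f', hL fstar] at h
    rw [← h, ← Finset.sum_sub_distrib, ← Finset.sum_sub_distrib]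
    refine Finset.sum_congr rfl fun s _ => ?_
    rw [← Finset.sum_sub_distrib, ← Finset.sum_sub_distrib]
    exact Finset.sum_congr rfl fun a _ => by ring
  -- f* minimizes the distance to Q* over F
  have hfstar_le : ∀ f' ∈ F,
      (∑ s, ∑ a, (d0 s * πb s a) * (fstar s a - Qstar s a) ^ 2)
        ≤ ∑ s, ∑ a, (d0 s * πb s a) * (f' s a - Qstar s a) ^ 2 := by
    intro f' hf'
    have h := hdiff f' hf'
    have hnn : (0:ℝ) ≤ ∑ s, ∑ a, (d0 s * πb s a) * (f' s a - fstar s a) ^ 2 :=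
      Finset.sum_nonneg fun s _ => Finset.sum_nonneg fun a _ =>
        mul_nonneg (hμ0 s a) (sq_nonneg _)
    linarith
  obtain ⟨ftil, hftilF, hftil⟩ := hatt
  set εf : ℝ := ∑ s, ∑ a, (d0 s * πb s a) * (fstar s a - Qstar s a) ^ 2 with hεfdef
  have hεf_le : εf ≤ εapprox := hftil ▸ hfstar_le ftil hftilF
  have hεf_nn : 0 ≤ εf :=
    Finset.sum_nonneg fun s _ => Finset.sum_nonneg fun a _ =>
      mul_nonneg (hμ0 s a) (sq_nonneg _)
  have hεa_nn : 0 ≤ εapprox := le_trans hεf_nn hεf_le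
  -- choose the optimal action
  have hch : ∀ s : S, ∃ a, a ∈ (Finset.univ : Finset A) ∧
      (Finset.univ.sup' Finset.univ_nonempty (Qstar s)) = Qstar s a := fun s =>
    Finset.exists_mem_eq_sup' Finset.univ_nonempty (Qstar s)
  choose astar _ hastar using hch
  -- value of greedy policy equals expected f* value
  have hvπ : ∑ s, d0 s * fstar s (gre fstar s) = ∑ s, d0 s * Qstar s (gre fstar s) := by
    rw [hvalid fstar hfstarF]
    refine Finset.sum_congr rfl fun s _ => ?_
    rw [hQstar, Finset.mul_sum]
    exact Finset.sum_congr rfl fun ω _ => by ring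
  set g : S → ℝ := fun s => Qstar s (astar s) - fstar s (astar s) with hgdef
  -- step 1: suboptimality bounded by sum of g
  have hkey1 : (∑ s, d0 s * Finset.univ.sup' Finset.univ_nonempty (Qstar s))
      - (∑ s, d0 s * Qstar s (gre fstar s)) ≤ ∑ s, d0 s * g s := by
    rw [← hvπ, ← Finset.sum_sub_distrib]
    refine Finset.sum_le_sum fun s _ => ?_
    have h1 := mul_le_mul_of_nonneg_left (hgre fstar s (astar s)) (hd0 s)
    have h2 : g s = Qstar s (astar s) - fstar s (astar s) := rfl
    rw [hastar s, h2]
    nlinarith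
  -- step 2: Cauchy-Schwarz
  have hcs : (∑ s, d0 s * g s) ≤ Real.sqrt (∑ s, d0 s * (g s) ^ 2) := by
    have h1 := Finset.sum_mul_sq_le_sq_mul_sq Finset.univ
      (fun s => Real.sqrt (d0 s)) (fun s => Real.sqrt (d0 s) * g s)
    have e1 : ∀ s : S, Real.sqrt (d0 s) * (Real.sqrt (d0 s) * g s) = d0 s * g s := by
      intro s
      rw [← mul_assoc, Real.mul_self_sqrt (hd0 s)]
    have e2 : ∀ s : S, (Real.sqrt (d0 s)) ^ 2 = d0 s := fun s => Real.sq_sqrt (hd0 s)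
    have e3 : ∀ s : S, (Real.sqrt (d0 s) * g s) ^ 2 = d0 s * (g s) ^ 2 := by
      intro s
      rw [mul_pow, e2]
    simp only [e1, e2, e3] at h1
    rw [hd01, one_mul] at h1
    have h2 : (∑ s, d0 s * g s) ≤ Real.sqrt ((∑ s, d0 s * g s) ^ 2) := by
      rw [Real.sqrt_sq_eq_abs]; exact le_abs_self _
    exact h2.trans (Real.sqrt_le_sqrt h1)
  -- step 3: concentrability
  have hbound : (∑ s, d0 s * (g s) ^ 2) ≤ C * εf := by
    rw [hεfdef, Finset.mul_sum]
    refine Finset.sum_le_sum fun s _ => ?_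
    have hp : 1 ≤ C * πb s (astar s) := by
      have h := hexp s (astar s)
      rw [div_le_iff₀ hC] at h
      linarith
    have hg2 : (g s) ^ 2 = (fstar s (astar s) - Qstar s (astar s)) ^ 2 := by
      have h2 : g s = Qstar s (astar s) - fstar s (astar s) := rfl
      rw [h2]; ring
    have h1 : d0 s * (g s) ^ 2
        ≤ C * ((d0 s * πb s (astar s)) * (fstar s (astar s) - Qstar s (astar s)) ^ 2) := by
      rw [← hg2]
      nlinarith [mul_nonneg (hd0 s) (sq_nonneg (g s))]
    have h2 : (d0 s * πb s (astar s)) * (fstar s (astar s) - Qstar s (astar s)) ^ 2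
        ≤ ∑ a, (d0 s * πb s a) * (fstar s a - Qstar s a) ^ 2 :=
      Finset.single_le_sum (f := fun a => (d0 s * πb s a) * (fstar s a - Qstar s a) ^ 2)
        (fun a _ => mul_nonneg (hμ0 s a) (sq_nonneg _)) (Finset.mem_univ (astar s))
    calc d0 s * (g s) ^ 2
        ≤ C * ((d0 s * πb s (astar s)) * (fstar s (astar s) - Qstar s (astar s)) ^ 2) := h1
      _ ≤ C * ∑ a, (d0 s * πb s a) * (fstar s a - Qstar s a) ^ 2 :=
          mul_le_mul_of_nonneg_left h2 hC.le
  -- combine: v* - v^π ≤ √(C εapprox)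
  have hmain : (∑ s, d0 s * Finset.univ.sup' Finset.univ_nonempty (Qstar s))
      - (∑ s, d0 s * Qstar s (gre fstar s)) ≤ Real.sqrt (C * εapprox) := by
    have h1 : Real.sqrt (∑ s, d0 s * (g s) ^ 2) ≤ Real.sqrt (C * εapprox) :=
      Real.sqrt_le_sqrt (hbound.trans (by nlinarith))
    exact hkey1.trans (hcs.trans h1)
  have halg := stmt8_alg C ε εapprox hC hε hεa_nn hsmall
  linarith
end

section
/- (Existence of boundary-invariant fixed point.) Suppose B : F → F satisfies the contraction property ‖Bf - Bf'‖_ν ≤ γ‖f-f'‖_{ν'} for all f,f' ∈ F where ν' is an admissible distribution depending on ν, f, f', and all functions in F are bounded in [0, V_max], F is finite, and γ ∈ [0,1). Then there exists f* ∈ F such that ‖Bf* - f*‖_ν = 0 for every admissible distribution ν. -/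
/-- Existence of a boundary-invariant fixed point of B (Theorem 5.5). -/
theorem stmt13 {S A : Type*} [Fintype S] [Fintype A]
    (Adm : Set (S → A → ℝ))
    (hAdm : ∀ ν ∈ Adm, (∀ s a, 0 ≤ ν s a) ∧ ∑ s, ∑ a, ν s a = 1)
    (Vmax : ℝ) (F : Finset (S → A → ℝ)) (hFne : F.Nonempty)
    (hFrange : ∀ f ∈ F, ∀ s a, 0 ≤ f s a ∧ f s a ≤ Vmax)
    (B : (S → A → ℝ) → (S → A → ℝ)) (hBF : ∀ f ∈ F, B f ∈ F)
    (γ : ℝ) (hγ0 : 0 ≤ γ) (hγ1 : γ < 1)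
    (hcontr : ∀ ν ∈ Adm, ∀ f ∈ F, ∀ f' ∈ F, ∃ ν' ∈ Adm,
      Real.sqrt (∑ s, ∑ a, ν s a * (B f s a - B f' s a) ^ 2)
        ≤ γ * Real.sqrt (∑ s, ∑ a, ν' s a * (f s a - f' s a) ^ 2)) :
    ∃ fstar ∈ F, ∀ ν ∈ Adm,
      Real.sqrt (∑ s, ∑ a, ν s a * (B fstar s a - fstar s a) ^ 2) = 0 := by
  classical
  obtain ⟨f₀, hf₀⟩ := hFne
  by_cases hA : ∃ ν, ν ∈ Adm
  swap
  · exact ⟨f₀, hf₀, fun ν hν => absurd ⟨ν, hν⟩ hA⟩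
  obtain ⟨ν₀, hν₀⟩ := hA
  obtain ⟨hν₀pos, hν₀sum⟩ := hAdm ν₀ hν₀
  obtain ⟨s₀, -, hs₀⟩ := Finset.exists_ne_zero_of_sum_ne_zero
    (show ∑ s, ∑ a, ν₀ s a ≠ 0 by rw [hν₀sum]; norm_num)
  obtain ⟨a₀, -, -⟩ := Finset.exists_ne_zero_of_sum_ne_zero hs₀
  have hV : (0:ℝ) ≤ Vmax :=
    le_trans (hFrange f₀ hf₀ s₀ a₀).1 (hFrange f₀ hf₀ s₀ a₀).2
  -- uniform bound
  have hbound : ∀ ν ∈ Adm, ∀ g ∈ F, ∀ g' ∈ F,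
      Real.sqrt (∑ s, ∑ a, ν s a * (g s a - g' s a) ^ 2) ≤ Vmax := by
    intro ν hν g hg g' hg'
    have hsum : ∑ s, ∑ a, ν s a * (g s a - g' s a) ^ 2 ≤ Vmax ^ 2 := by
      calc ∑ s, ∑ a, ν s a * (g s a - g' s a) ^ 2
          ≤ ∑ s, ∑ a, ν s a * Vmax ^ 2 := by
            refine Finset.sum_le_sum fun s _ => Finset.sum_le_sum fun a _ => ?_
            refine mul_le_mul_of_nonneg_left ?_ ((hAdm ν hν).1 s a)
            have h1 := hFrange g hg s a
            have h2 := hFrange g' hg' s a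
            exact sq_le_sq' (by linarith [h1.1, h1.2, h2.1, h2.2])
              (by linarith [h1.1, h1.2, h2.1, h2.2])
        _ = Vmax ^ 2 := by
            simp_rw [← Finset.sum_mul]
            rw [(hAdm ν hν).2, one_mul]
    calc Real.sqrt (∑ s, ∑ a, ν s a * (g s a - g' s a) ^ 2)
        ≤ Real.sqrt (Vmax ^ 2) := Real.sqrt_le_sqrt hsum
      _ = Vmax := Real.sqrt_sq hV
  -- iterates stay in F
  have hiter : ∀ k, ∀ f ∈ F, B^[k] f ∈ F := by
    intro k
    induction k with
    | zero => intro f hf; simpa using hf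
    | succ k ih =>
      intro f hf
      rw [Function.iterate_succ_apply']
      exact hBF _ (ih f hf)
  -- key contraction estimate
  have key : ∀ k, ∀ ν ∈ Adm, ∀ f ∈ F,
      Real.sqrt (∑ s, ∑ a, ν s a * (B (B^[k] f) s a - B^[k] f s a) ^ 2)
        ≤ γ ^ k * Vmax := by
    intro k
    induction k with
    | zero =>
      intro ν hν f hf
      simpa using hbound ν hν (B f) (hBF f hf) f hf
    | succ k ih =>
      intro ν hν f hf
      rw [Function.iterate_succ_apply']
      obtain ⟨ν', hν', hc⟩ := hcontr ν hν (B (B^[k] f)) (hBF _ (hiter k f hf))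
        (B^[k] f) (hiter k f hf)
      calc Real.sqrt (∑ s, ∑ a, ν s a *
            (B (B (B^[k] f)) s a - B (B^[k] f) s a) ^ 2)
          ≤ γ * Real.sqrt (∑ s, ∑ a, ν' s a *
            (B (B^[k] f) s a - B^[k] f s a) ^ 2) := hc
        _ ≤ γ * (γ ^ k * Vmax) :=
            mul_le_mul_of_nonneg_left (ih ν' hν' f hf) hγ0
        _ = γ ^ (k + 1) * Vmax := by ring
  -- find a cycle
  obtain ⟨i, hi, j, hj, hne, heq⟩ :
      ∃ i ∈ Finset.range (F.card + 1), ∃ j ∈ Finset.range (F.card + 1),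
        i ≠ j ∧ B^[i] f₀ = B^[j] f₀ := by
    have := Finset.exists_ne_map_eq_of_card_lt_of_maps_to
      (s := Finset.range (F.card + 1)) (t := F)
      (by simp) (fun k _ => hiter k f₀ hf₀)
    obtain ⟨i, hi, j, hj, hne, heq⟩ := this
    exact ⟨i, hi, j, hj, hne, heq⟩
  -- wlog i < j
  obtain ⟨i, j, hij, heq⟩ : ∃ i j, i < j ∧ B^[i] f₀ = B^[j] f₀ := by
    rcases hne.lt_or_gt with h | h
    · exact ⟨i, j, h, heq⟩
    · exact ⟨j, i, h, heq.symm⟩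
  set fstar := B^[i] f₀ with hfstar
  have hfstarF : fstar ∈ F := hiter i f₀ hf₀
  set p := j - i with hp
  have hppos : 0 < p := Nat.sub_pos_of_lt hij
  have hfix : B^[p] fstar = fstar := by
    rw [hfstar, ← Function.iterate_add_apply, hp, Nat.sub_add_cancel hij.le, ← heq]
  have hfixn : ∀ n, B^[n * p] fstar = fstar := by
    intro n
    rw [Nat.mul_comm, Function.iterate_mul]
    exact Function.iterate_fixed hfix n
  refine ⟨fstar, hfstarF, fun ν hν => ?_⟩
  have hle : ∀ n, Real.sqrt (∑ s, ∑ a, ν s a * (B fstar s a - fstar s a) ^ 2)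
      ≤ ((γ ^ p) ^ n) * Vmax := by
    intro n
    have := key (n * p) ν hν fstar hfstarF
    rw [hfixn n] at this
    calc Real.sqrt (∑ s, ∑ a, ν s a * (B fstar s a - fstar s a) ^ 2)
        ≤ γ ^ (n * p) * Vmax := this
      _ = (γ ^ p) ^ n * Vmax := by rw [← pow_mul, Nat.mul_comm]
  have hγp : γ ^ p < 1 := pow_lt_one₀ hγ0 hγ1 hppos.ne'
  have htend : Filter.Tendsto (fun n => ((γ ^ p) ^ n) * Vmax) Filter.atTop (nhds 0) := by
    have := (tendsto_pow_atTop_nhds_zero_of_lt_one (pow_nonneg hγ0 p) hγp).mul_const Vmax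
    simpa using this
  have hle0 : Real.sqrt (∑ s, ∑ a, ν s a * (B fstar s a - fstar s a) ^ 2) ≤ 0 :=
    ge_of_tendsto' htend hle
  exact le_antisymm hle0 (Real.sqrt_nonneg _)
end

section
/- (Value difference decomposition.) In an infinite-horizon discounted MDP, for any function f : S×A → ℝ, any policy π, and any initial state-action distribution ν: E_ν[f] - E_ν[Q^π] = Σ_{t=1}^∞ γ^{t-1} E_{(s,a)∼d_{ν,t}^π, r∼R(s,a), s'∼P(s,a)}[f(s,a) - r - γ max_{a'} f(s',a')] when π = π_f is greedy w.r.t. f; more generally with f(s', π(s')) in place of max_{a'} f(s',a'). -/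
open Finset

/-- One step of the state-action distribution dynamics under policy `π`. -/
noncomputable def stepDist {S A : Type*} [Fintype S] [Fintype A] [DecidableEq A]
    (P : S → A → S → ℝ) (π : S → A) (ν : S → A → ℝ) : S → A → ℝ :=
  fun s' a' => if a' = π s' then ∑ s, ∑ a, ν s a * P s a s' else 0

/-- Point mass at the state-action pair `(s0, a0)`. -/
noncomputable def pointMass {S A : Type*} [DecidableEq S] [DecidableEq A]
    (s0 : S) (a0 : A) : S → A → ℝ :=
  fun s a => if s = s0 ∧ a = a0 then 1 else 0

/-- `Qpi P Rbar γ π s0 a0` is Q^π(s0,a0): the expected discounted return starting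
from `(s0, a0)` and following `π` thereafter. -/
noncomputable def Qpi {S A : Type*} [Fintype S] [Fintype A] [DecidableEq S] [DecidableEq A]
    (P : S → A → S → ℝ) (Rbar : S → A → ℝ) (γ : ℝ) (π : S → A) (s0 : S) (a0 : A) : ℝ :=
  ∑' t : ℕ, γ ^ t *
    ∑ s, ∑ a, ((stepDist P π)^[t] (pointMass s0 a0)) s a * Rbar s a

/-!
The one-step identity `E_{d_{t+1}}[f] = E_{d_t}[(s, a) ↦ Σ_{s'} P(s' | s, a) f(s', π s')]` makes the
discounted sum of the Bellman residuals telescope to `E_ν[f]` minus the discounted sum of expected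
rewards, and the latter is `E_ν[Q^π]` because the dynamics are linear in the initial weights and
`ν` is a combination of point masses. The series converge since a stochastic step does not increase
the `ℓ¹` mass of a signed weight, so the `t`-th term is at most `γ^t ‖ν‖₁ ‖g‖_∞`.
-/

theorem Summable.tsum_sub_nat_succ {α : Type*} [AddCommGroup α] [TopologicalSpace α]
    [IsTopologicalAddGroup α] [T2Space α] {u : ℕ → α} (hu : Summable u) :
    ∑' t, (u t - u (t + 1)) = u 0 := by
  rw [hu.tsum_sub ((summable_nat_add_iff 1).mpr hu), hu.tsum_eq_zero_add, add_sub_cancel_right]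

theorem summable_pow_mul_of_abs_le {γ : ℝ} (hγ0 : 0 ≤ γ) (hγ1 : γ < 1) {u : ℕ → ℝ} {C : ℝ}
    (hu : ∀ t, |u t| ≤ C) : Summable fun t => γ ^ t * u t := by
  refine .of_norm_bounded ((summable_geometric_of_lt_one hγ0 hγ1).mul_right C) fun t => ?_
  rw [norm_mul, norm_pow, Real.norm_of_nonneg hγ0, Real.norm_eq_abs]
  exact mul_le_mul_of_nonneg_left (hu t) (pow_nonneg hγ0 t)

section Expectation

variable {S A : Type*} [Fintype S] [Fintype A]

noncomputable def expectation (g : S → A → ℝ) : (S → A → ℝ) →ₗ[ℝ] ℝ where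
  toFun μ := ∑ s, ∑ a, μ s a * g s a
  map_add' μ μ' := by simp only [Pi.add_apply, add_mul, sum_add_distrib]
  map_smul' c μ := by simp only [Pi.smul_apply, smul_eq_mul, mul_assoc, mul_sum, RingHom.id_apply]

theorem expectation_apply (g μ : S → A → ℝ) :
    expectation g μ = ∑ s, ∑ a, μ s a * g s a := rfl

theorem abs_expectation_le (g μ : S → A → ℝ) :
    |expectation g μ| ≤ (∑ s, ∑ a, |μ s a|) * ‖g‖ := by
  rw [expectation_apply, sum_mul]
  refine (abs_sum_le_sum_abs _ _).trans (sum_le_sum fun s _ => ?_)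
  rw [sum_mul]
  refine (abs_sum_le_sum_abs _ _).trans (sum_le_sum fun a _ => ?_)
  rw [abs_mul]
  gcongr
  exact (Real.norm_eq_abs _ ▸ norm_le_pi_norm (g s) a).trans (norm_le_pi_norm g s)

theorem LinearMap.eq_sum_pointMass [DecidableEq S] [DecidableEq A]
    (φ : (S → A → ℝ) →ₗ[ℝ] ℝ) (ν : S → A → ℝ) :
    φ ν = ∑ s, ∑ a, ν s a * φ (pointMass s a) := by
  have hν : ν = ∑ s, ∑ a, ν s a • pointMass s a := by
    ext s' a'
    simp [pointMass, ite_and]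
  conv_lhs => rw [hν]
  simp only [map_sum, map_smul, smul_eq_mul]

end Expectation

namespace stepDist

variable {S A : Type*} [Fintype S] [Fintype A] [DecidableEq A] {P : S → A → S → ℝ} (π : S → A)

variable (P) in
noncomputable def linearMap : Module.End ℝ (S → A → ℝ) where
  toFun := stepDist P π
  map_add' μ μ' := by
    ext s' a'
    simp only [stepDist, Pi.add_apply, add_mul, sum_add_distrib]
    split_ifs <;> simp
  map_smul' c μ := by
    ext s' a'
    simp only [stepDist, Pi.smul_apply, smul_eq_mul, mul_assoc, ← mul_sum, RingHom.id_apply]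
    split_ifs <;> simp

theorem iterate_eq_pow (t : ℕ) : (stepDist P π)^[t] = ⇑(linearMap P π ^ t) := by
  rw [Module.End.coe_pow]
  rfl

theorem expectation_stepDist (g μ : S → A → ℝ) :
    expectation g (stepDist P π μ) = expectation (fun s a => ∑ s', P s a s' * g s' (π s')) μ := by
  simp only [expectation_apply, stepDist, ite_mul, zero_mul, sum_ite_eq', mem_univ, if_true,
    sum_mul, mul_sum, mul_assoc]
  rw [sum_comm]
  exact sum_congr rfl fun s _ => sum_comm

theorem expectation_bellman_residual (Rbar f μ : S → A → ℝ) (γ : ℝ) :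
    ∑ s, ∑ a, μ s a * (f s a - Rbar s a - γ * ∑ s', P s a s' * f s' (π s'))
      = expectation f μ - expectation Rbar μ - γ * expectation f (stepDist P π μ) := by
  rw [expectation_stepDist]
  simp only [expectation_apply, mul_sub, sum_sub_distrib, mul_sum, mul_left_comm]

theorem sum_sum (hP : ∀ s a, ∑ s', P s a s' = 1) (μ : S → A → ℝ) :
    ∑ s, ∑ a, stepDist P π μ s a = ∑ s, ∑ a, μ s a := by
  simpa [expectation_apply, hP] using expectation_stepDist (P := P) π 1 μ

theorem abs_le_stepDist_abs (hP : ∀ s a s', 0 ≤ P s a s') (μ : S → A → ℝ) (s : S) (a : A) :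
    |stepDist P π μ s a| ≤ stepDist P π |μ| s a := by
  simp only [stepDist]
  split_ifs
  · refine (abs_sum_le_sum_abs _ _).trans (sum_le_sum fun s' _ => ?_)
    refine (abs_sum_le_sum_abs _ _).trans (sum_le_sum fun a' _ => ?_)
    rw [abs_mul, abs_of_nonneg (hP _ _ _), Pi.abs_apply, Pi.abs_apply]
  · simp

theorem sum_sum_abs_le (hP : ∀ s a, (∀ s', 0 ≤ P s a s') ∧ ∑ s', P s a s' = 1)
    (μ : S → A → ℝ) : ∑ s, ∑ a, |stepDist P π μ s a| ≤ ∑ s, ∑ a, |μ s a| :=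
  calc ∑ s, ∑ a, |stepDist P π μ s a|
      ≤ ∑ s, ∑ a, stepDist P π |μ| s a := by
        gcongr with s _ a _
        exact abs_le_stepDist_abs π (fun s a => (hP s a).1) μ s a
    _ = ∑ s, ∑ a, |μ s a| := sum_sum π (fun s a => (hP s a).2) |μ|

theorem sum_sum_abs_iterate_le (hP : ∀ s a, (∀ s', 0 ≤ P s a s') ∧ ∑ s', P s a s' = 1)
    (μ : S → A → ℝ) (t : ℕ) : ∑ s, ∑ a, |(stepDist P π)^[t] μ s a| ≤ ∑ s, ∑ a, |μ s a| := by
  induction t with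
  | zero => rfl
  | succ t ih =>
    rw [Function.iterate_succ_apply']
    exact (sum_sum_abs_le π hP _).trans ih

theorem summable_pow_mul_expectation_iterate
    (hP : ∀ s a, (∀ s', 0 ≤ P s a s') ∧ ∑ s', P s a s' = 1) {γ : ℝ} (hγ0 : 0 ≤ γ) (hγ1 : γ < 1)
    (g μ : S → A → ℝ) : Summable fun t => γ ^ t * expectation g ((stepDist P π)^[t] μ) :=
  summable_pow_mul_of_abs_le hγ0 hγ1 (C := (∑ s, ∑ a, |μ s a|) * ‖g‖) fun t =>
    (abs_expectation_le g _).trans <|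
      mul_le_mul_of_nonneg_right (sum_sum_abs_iterate_le π hP μ t) (norm_nonneg g)

end stepDist

theorem sum_mul_Qpi {S A : Type*} [Fintype S] [Fintype A] [DecidableEq S] [DecidableEq A]
    {P : S → A → S → ℝ} (hP : ∀ s a, (∀ s', 0 ≤ P s a s') ∧ ∑ s', P s a s' = 1)
    (Rbar : S → A → ℝ) {γ : ℝ} (hγ0 : 0 ≤ γ) (hγ1 : γ < 1) (π : S → A) (ν : S → A → ℝ) :
    ∑ s, ∑ a, ν s a * Qpi P Rbar γ π s a
      = ∑' t, γ ^ t * expectation Rbar ((stepDist P π)^[t] ν) := by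
  have hQ (s : S) (a : A) : HasSum
      (fun t => ν s a * (γ ^ t * expectation Rbar ((stepDist P π)^[t] (pointMass s a))))
      (ν s a * Qpi P Rbar γ π s a) :=
    (stepDist.summable_pow_mul_expectation_iterate π hP hγ0 hγ1 Rbar _).hasSum.mul_left _
  refine (HasSum.tsum_eq ?_).symm
  convert hasSum_sum fun s _ => hasSum_sum fun a _ => hQ s a using 1
  funext t
  rw [stepDist.iterate_eq_pow, ← LinearMap.comp_apply, LinearMap.eq_sum_pointMass]
  simp only [mul_sum, LinearMap.comp_apply, ← stepDist.iterate_eq_pow, mul_left_comm]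

theorem stmt15_general {S A : Type*} [Fintype S] [Fintype A] [DecidableEq S] [DecidableEq A]
    (P : S → A → S → ℝ)
    (hP : ∀ s a, (∀ s', 0 ≤ P s a s') ∧ ∑ s', P s a s' = 1)
    (Rbar : S → A → ℝ)
    (γ : ℝ) (hγ0 : 0 ≤ γ) (hγ1 : γ < 1)
    (π : S → A) (f : S → A → ℝ)
    (ν : S → A → ℝ) :
    (∑ s, ∑ a, ν s a * f s a) - (∑ s, ∑ a, ν s a * Qpi P Rbar γ π s a)
      = ∑' t : ℕ, γ ^ t *
          ∑ s, ∑ a, ((stepDist P π)^[t] ν) s a *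
            (f s a - Rbar s a - γ * ∑ s', P s a s' * f s' (π s')) := by
  set F : ℕ → ℝ := fun t => γ ^ t * expectation f ((stepDist P π)^[t] ν)
  set G : ℕ → ℝ := fun t => γ ^ t * expectation Rbar ((stepDist P π)^[t] ν)
  have hF : Summable F := stepDist.summable_pow_mul_expectation_iterate π hP hγ0 hγ1 f ν
  have hG : Summable G := stepDist.summable_pow_mul_expectation_iterate π hP hγ0 hγ1 Rbar ν
  have hterm (t : ℕ) : γ ^ t * ∑ s, ∑ a, ((stepDist P π)^[t] ν) s a *
      (f s a - Rbar s a - γ * ∑ s', P s a s' * f s' (π s')) = (F t - F (t + 1)) - G t := by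
    rw [stepDist.expectation_bellman_residual, ← Function.iterate_succ_apply' (stepDist P π)]
    simp only [F, G, pow_succ]
    ring
  rw [tsum_congr hterm, (hF.sub ((summable_nat_add_iff 1).mpr hF)).tsum_sub hG,
    hF.tsum_sub_nat_succ, sum_mul_Qpi hP Rbar hγ0 hγ1]
  simp [F, G, expectation_apply]

/-- Value difference decomposition (Lemma 1 of Jiang et al. 2017), general form. -/
theorem stmt15 {S A : Type*} [Fintype S] [Fintype A] [DecidableEq S] [DecidableEq A]
    (P : S → A → S → ℝ)
    (hP : ∀ s a, (∀ s', 0 ≤ P s a s') ∧ ∑ s', P s a s' = 1)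
    (Rmax : ℝ) (Rbar : S → A → ℝ)
    (hR : ∀ s a, 0 ≤ Rbar s a ∧ Rbar s a ≤ Rmax)
    (γ : ℝ) (hγ0 : 0 ≤ γ) (hγ1 : γ < 1)
    (π : S → A) (f : S → A → ℝ)
    (ν : S → A → ℝ) (hν : ∀ s a, 0 ≤ ν s a) (hν1 : ∑ s, ∑ a, ν s a = 1) :
    (∑ s, ∑ a, ν s a * f s a) - (∑ s, ∑ a, ν s a * Qpi P Rbar γ π s a)
      = ∑' t : ℕ, γ ^ t *
          ∑ s, ∑ a, ((stepDist P π)^[t] ν) s a *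
            (f s a - Rbar s a - γ * ∑ s', P s a s' * f s' (π s')) :=
  stmt15_general P hP Rbar γ hγ0 hγ1 π f ν
end

section
/- (f* is a value function of its greedy policy on admissible distributions.) Under Assumption 5.4 with f* ∈ F satisfying ‖Bf* - f*‖_ν = 0 for all admissible ν: for every admissible distribution ν, E_ν[Q^{π_{f*}}] = E_ν[f*], where π_{f*} is the greedy policy of f*. -/
set_option linter.unusedSectionVars false
set_option linter.unusedVariables false
set_option maxHeartbeats 1000000


open Finset

open Filter

lemma sum_swap3 {α γ δ : Type*} [Fintype α] [Fintype γ] [Fintype δ]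
    (G : α → γ → δ → ℝ) :
    ∑ a, ∑ c, ∑ d, G a c d = ∑ c, ∑ d, ∑ a, G a c d := by
  rw [Finset.sum_comm]
  exact Finset.sum_congr rfl fun c _ => Finset.sum_comm

lemma sum_swap4 {α β γ δ : Type*} [Fintype α] [Fintype β] [Fintype γ] [Fintype δ]
    (F : α → β → γ → δ → ℝ) :
    ∑ a, ∑ b, ∑ c, ∑ d, F a b c d = ∑ c, ∑ d, ∑ a, ∑ b, F a b c d :=
  calc ∑ a, ∑ b, ∑ c, ∑ d, F a b c d
      = ∑ a, ∑ c, ∑ d, ∑ b, F a b c d :=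
        Finset.sum_congr rfl fun a _ => sum_swap3 (fun b c d => F a b c d)
    _ = ∑ c, ∑ d, ∑ a, ∑ b, F a b c d := sum_swap3 _

section Aux
variable {S A : Type*} [Fintype S] [Fintype A] [DecidableEq S] [DecidableEq A]
variable (P : S → A → S → ℝ) (π : S → A)

lemma sum_stepDist_mul (ν : S → A → ℝ) (g : S → A → ℝ) :
    ∑ s', ∑ a', stepDist P π ν s' a' * g s' a'
      = ∑ s, ∑ a, ν s a * ∑ s', P s a s' * g s' (π s') := by
  unfold stepDist
  have h1 : ∀ s' : S, ∑ a', (if a' = π s' then (∑ s, ∑ a, ν s a * P s a s') else 0) * g s' a'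
      = (∑ s, ∑ a, ν s a * P s a s') * g s' (π s') := by
    intro s'
    rw [Finset.sum_eq_single (π s')]
    · simp
    · intro b _ hb; simp [hb]
    · simp
  simp_rw [h1, Finset.sum_mul, mul_assoc, Finset.mul_sum]
  exact sum_swap3 _

lemma stepDist_isDist (hP : ∀ s a, (∀ s', 0 ≤ P s a s') ∧ ∑ s', P s a s' = 1)
    (ν : S → A → ℝ) (hν : (∀ s a, 0 ≤ ν s a) ∧ ∑ s, ∑ a, ν s a = 1) :
    (∀ s a, 0 ≤ stepDist P π ν s a) ∧ ∑ s, ∑ a, stepDist P π ν s a = 1 := by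
  constructor
  · intro s a
    unfold stepDist
    split
    · exact Finset.sum_nonneg fun s' _ => Finset.sum_nonneg fun a' _ =>
        mul_nonneg (hν.1 s' a') ((hP s' a').1 s)
    · exact le_rfl
  · have := sum_stepDist_mul P π ν (fun _ _ => 1)
    simp only [mul_one] at this
    rw [this]
    simp_rw [(fun s a => (hP s a).2 : ∀ s a, ∑ s', P s a s' = 1), mul_one]
    exact hν.2

lemma iterate_isDist (hP : ∀ s a, (∀ s', 0 ≤ P s a s') ∧ ∑ s', P s a s' = 1)
    (ν : S → A → ℝ) (hν : (∀ s a, 0 ≤ ν s a) ∧ ∑ s, ∑ a, ν s a = 1) (t : ℕ) :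
    (∀ s a, 0 ≤ (stepDist P π)^[t] ν s a) ∧ ∑ s, ∑ a, (stepDist P π)^[t] ν s a = 1 := by
  induction t with
  | zero => exact hν
  | succ n ih =>
    rw [Function.iterate_succ_apply']
    exact stepDist_isDist P π hP _ ih

lemma pointMass_isDist (s0 : S) (a0 : A) :
    (∀ s a, 0 ≤ pointMass s0 a0 s a) ∧ ∑ s, ∑ a, pointMass s0 a0 s a = 1 := by
  constructor
  · intro s a; unfold pointMass; split <;> norm_num
  · unfold pointMass
    simp [ite_and, Finset.sum_ite_eq]

lemma iterate_linear (ν : S → A → ℝ) (t : ℕ) (s' : S) (a' : A) :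
    (stepDist P π)^[t] ν s' a'
      = ∑ s0, ∑ a0, ν s0 a0 * (stepDist P π)^[t] (pointMass s0 a0) s' a' := by
  induction t generalizing s' a' with
  | zero =>
    simp only [Function.iterate_zero, id_eq, pointMass, mul_ite, mul_one, mul_zero]
    simp [ite_and, Finset.sum_ite_eq]
  | succ n ih =>
    simp only [Function.iterate_succ_apply', stepDist]
    by_cases h : a' = π s'
    · simp only [if_pos h]
      simp_rw [ih, Finset.sum_mul, mul_assoc, Finset.mul_sum]
      exact sum_swap4 _
    · simp [if_neg h]

lemma exp_iterate_linear (ν : S → A → ℝ) (f : S → A → ℝ) (t : ℕ) :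
    ∑ s, ∑ a, (stepDist P π)^[t] ν s a * f s a
      = ∑ s0, ∑ a0, ν s0 a0 * ∑ s, ∑ a, (stepDist P π)^[t] (pointMass s0 a0) s a * f s a := by
  have h : ∀ s a, (stepDist P π)^[t] ν s a * f s a
      = ∑ s0, ∑ a0, ν s0 a0 * ((stepDist P π)^[t] (pointMass s0 a0) s a * f s a) := by
    intro s a
    rw [iterate_linear P π ν t s a, Finset.sum_mul]
    refine Finset.sum_congr rfl fun s0 _ => ?_
    rw [Finset.sum_mul]
    exact Finset.sum_congr rfl fun a0 _ => by ring
  rw [Finset.sum_congr rfl fun s _ => Finset.sum_congr rfl fun a _ => h s a, sum_swap4]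
  simp_rw [Finset.mul_sum]

/-- Expectation of a bounded function under a distribution is bounded. -/
lemma exp_bounds (ν : S → A → ℝ) (hν : (∀ s a, 0 ≤ ν s a) ∧ ∑ s, ∑ a, ν s a = 1)
    (f : S → A → ℝ) (M : ℝ) (hf : ∀ s a, 0 ≤ f s a ∧ f s a ≤ M) :
    0 ≤ ∑ s, ∑ a, ν s a * f s a ∧ ∑ s, ∑ a, ν s a * f s a ≤ M := by
  constructor
  · exact Finset.sum_nonneg fun s _ => Finset.sum_nonneg fun a _ =>
      mul_nonneg (hν.1 s a) (hf s a).1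
  · calc ∑ s, ∑ a, ν s a * f s a
        ≤ ∑ s, ∑ a, ν s a * M :=
          Finset.sum_le_sum fun s _ => Finset.sum_le_sum fun a _ =>
            mul_le_mul_of_nonneg_left (hf s a).2 (hν.1 s a)
      _ = M := by
          simp_rw [← Finset.sum_mul]
          rw [hν.2, one_mul]

end Aux

/-- f* is a value function of its greedy policy on all admissible distributions
(key step of Theorem 5.6). -/
theorem stmt16 {S A : Type*} [Fintype S] [Fintype A] [Nonempty A]
    [DecidableEq S] [DecidableEq A]
    (P : S → A → S → ℝ)
    (hP : ∀ s a, (∀ s', 0 ≤ P s a s') ∧ ∑ s', P s a s' = 1)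
    (Rmax Vmax : ℝ) (Rbar : S → A → ℝ)
    (hR : ∀ s a, 0 ≤ Rbar s a ∧ Rbar s a ≤ Rmax)
    (γ : ℝ) (hγ0 : 0 ≤ γ) (hγ1 : γ < 1)
    (F : Finset (S → A → ℝ))
    (hFrange : ∀ f ∈ F, ∀ s a, 0 ≤ f s a ∧ f s a ≤ Vmax)
    (fstar : S → A → ℝ) (hfstarF : fstar ∈ F)
    -- greedy policy of f*
    (πstar : S → A) (hπstar : ∀ s a, fstar s a ≤ fstar s (πstar s))
    -- admissible distributions, closed under the dynamics of π_{f*}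
    (Adm : Set (S → A → ℝ))
    (hAdm : ∀ ν ∈ Adm, (∀ s a, 0 ≤ ν s a) ∧ ∑ s, ∑ a, ν s a = 1)
    (hclosed : ∀ ν ∈ Adm, stepDist P πstar ν ∈ Adm)
    -- B f* is a valid reward function of r + γ max_{a'} f*(s',a') on Adm
    (B : (S → A → ℝ) → (S → A → ℝ)) (hBF : ∀ f ∈ F, B f ∈ F)
    (hBvalid : ∀ ν ∈ Adm,
      (∑ s, ∑ a, ν s a * B fstar s a)
        = ∑ s, ∑ a, ν s a * (Rbar s a
            + γ * ∑ s', P s a s' * Finset.univ.sup' Finset.univ_nonempty (fstar s')))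
    -- ‖B f* − f*‖_ν = 0 for all admissible ν
    (hfix : ∀ ν ∈ Adm, ∑ s, ∑ a, ν s a * (B fstar s a - fstar s a) ^ 2 = 0) :
    ∀ ν ∈ Adm,
      (∑ s, ∑ a, ν s a * Qpi P Rbar γ πstar s a) = ∑ s, ∑ a, ν s a * fstar s a := by
  
  intro ν hν
  have hνdist := hAdm ν hν
  -- the max of fstar is attained at the greedy action
  have hsup : ∀ s' : S, Finset.univ.sup' Finset.univ_nonempty (fstar s') = fstar s' (πstar s') :=
    fun s' => le_antisymm (Finset.sup'_le _ _ fun a _ => hπstar s' a)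
      (Finset.le_sup' _ (Finset.mem_univ _))
  -- one-step recursion on admissible distributions
  have hstep : ∀ μ ∈ Adm, (∑ s, ∑ a, μ s a * fstar s a)
      = (∑ s, ∑ a, μ s a * Rbar s a)
        + γ * ∑ s, ∑ a, stepDist P πstar μ s a * fstar s a := by
    intro μ hμ
    have hμd := hAdm μ hμ
    have hEB : (∑ s, ∑ a, μ s a * B fstar s a) = ∑ s, ∑ a, μ s a * fstar s a := by
      have hterm : ∀ s a, μ s a * (B fstar s a - fstar s a) ^ 2 = 0 := by
        intro s a
        have h1 : ∀ s ∈ (Finset.univ : Finset S),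
            0 ≤ ∑ a, μ s a * (B fstar s a - fstar s a) ^ 2 :=
          fun s _ => Finset.sum_nonneg fun a _ => mul_nonneg (hμd.1 s a) (sq_nonneg _)
        have h2 := (Finset.sum_eq_zero_iff_of_nonneg h1).mp (hfix μ hμ) s (Finset.mem_univ s)
        have h3 : ∀ a ∈ (Finset.univ : Finset A),
            0 ≤ μ s a * (B fstar s a - fstar s a) ^ 2 :=
          fun a _ => mul_nonneg (hμd.1 s a) (sq_nonneg _)
        exact (Finset.sum_eq_zero_iff_of_nonneg h3).mp h2 a (Finset.mem_univ a)
      have hterm' : ∀ s a, μ s a * B fstar s a = μ s a * fstar s a := by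
        intro s a
        rcases mul_eq_zero.mp (hterm s a) with h | h
        · rw [h, zero_mul, zero_mul]
        · have := (pow_eq_zero_iff (by norm_num : (2:ℕ) ≠ 0)).mp h
          have hBf : B fstar s a = fstar s a := by linarith [sub_eq_zero.mp this]
          rw [hBf]
      exact Finset.sum_congr rfl fun s _ => Finset.sum_congr rfl fun a _ => hterm' s a
    rw [← hEB, hBvalid μ hμ, sum_stepDist_mul]
    simp_rw [hsup, mul_add, Finset.sum_add_distrib]
    congr 1
    rw [Finset.mul_sum]
    refine Finset.sum_congr rfl fun s _ => ?_
    rw [Finset.mul_sum]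
    exact Finset.sum_congr rfl fun a _ => by ring
  -- the iterated distributions are admissible
  have hνtAdm : ∀ t, (stepDist P πstar)^[t] ν ∈ Adm := by
    intro t; induction t with
    | zero => exact hν
    | succ n ih => rw [Function.iterate_succ_apply']; exact hclosed _ ih
  have hνtdist : ∀ t, (∀ s a, 0 ≤ (stepDist P πstar)^[t] ν s a)
      ∧ ∑ s, ∑ a, (stepDist P πstar)^[t] ν s a = 1 :=
    fun t => hAdm _ (hνtAdm t)
  -- abbreviations
  set r : ℕ → ℝ := fun t => ∑ s, ∑ a, (stepDist P πstar)^[t] ν s a * Rbar s a with hrdef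
  set g : ℕ → ℝ := fun t => ∑ s, ∑ a, (stepDist P πstar)^[t] ν s a * fstar s a with hgdef
  have hrB : ∀ t, 0 ≤ r t ∧ r t ≤ Rmax :=
    fun t => exp_bounds _ (hνtdist t) Rbar Rmax hR
  have hgB : ∀ t, 0 ≤ g t ∧ g t ≤ Vmax :=
    fun t => exp_bounds _ (hνtdist t) fstar Vmax (hFrange fstar hfstarF)
  -- telescoping
  have htel : ∀ N : ℕ, g 0 = (∑ t ∈ Finset.range N, γ ^ t * r t) + γ ^ N * g N := by
    intro N; induction N with
    | zero => simp
    | succ n ih =>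
      rw [ih, Finset.sum_range_succ]
      have hgn : g n = r n + γ * g (n + 1) := by
        have h' := hstep _ (hνtAdm n)
        rw [hgdef, hrdef]
        simp only
        rw [Function.iterate_succ_apply']
        exact h'
      rw [hgn]
      ring
  -- summability
  have hsummable : Summable (fun t => γ ^ t * r t) := by
    refine Summable.of_nonneg_of_le
      (fun t => mul_nonneg (pow_nonneg hγ0 t) (hrB t).1)
      (fun t => ?_) ((summable_geometric_of_lt_one hγ0 hγ1).mul_right Rmax)
    exact mul_le_mul_of_nonneg_left (hrB t).2 (pow_nonneg hγ0 t)
  -- g 0 equals the sum of the series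
  have hkey : (∑' t : ℕ, γ ^ t * r t) = g 0 := by
    have h1 : Tendsto (fun N => ∑ t ∈ Finset.range N, γ ^ t * r t) atTop
        (nhds (∑' t : ℕ, γ ^ t * r t)) := hsummable.hasSum.tendsto_sum_nat
    have hgb : Tendsto (fun N : ℕ => γ ^ N * g N) atTop (nhds 0) := by
      refine squeeze_zero_norm (a := fun N => γ ^ N * |Vmax|) (fun N => ?_) ?_
      · show |γ ^ N * g N| ≤ γ ^ N * |Vmax|
        rw [abs_mul, abs_of_nonneg (pow_nonneg hγ0 N)]
        refine mul_le_mul_of_nonneg_left ?_ (pow_nonneg hγ0 N)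
        exact abs_le.mpr ⟨by nlinarith [(hgB N).1, abs_nonneg Vmax],
          le_trans (hgB N).2 (le_abs_self Vmax)⟩
      · have := (tendsto_pow_atTop_nhds_zero_of_lt_one hγ0 hγ1).mul_const |Vmax|
        simpa using this
    have h2 : Tendsto (fun N => ∑ t ∈ Finset.range N, γ ^ t * r t) atTop (nhds (g 0)) := by
      have h3 : Tendsto (fun N : ℕ => g 0 - γ ^ N * g N) atTop (nhds (g 0 - 0)) :=
        tendsto_const_nhds.sub hgb
      rw [sub_zero] at h3
      refine h3.congr fun N => ?_
      have := htel N
      linarith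
    exact tendsto_nhds_unique h1 h2
  -- rewrite the LHS as the series
  have hpm : ∀ (s0 : S) (a0 : A) (t : ℕ),
      0 ≤ (γ ^ t * ∑ s, ∑ a, (stepDist P πstar)^[t] (pointMass s0 a0) s a * Rbar s a)
      ∧ (γ ^ t * ∑ s, ∑ a, (stepDist P πstar)^[t] (pointMass s0 a0) s a * Rbar s a)
          ≤ γ ^ t * Rmax := by
    intro s0 a0 t
    have hd := iterate_isDist P πstar hP (pointMass s0 a0) (pointMass_isDist s0 a0) t
    have hb := exp_bounds _ hd Rbar Rmax hR
    exact ⟨mul_nonneg (pow_nonneg hγ0 t) hb.1,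
      mul_le_mul_of_nonneg_left hb.2 (pow_nonneg hγ0 t)⟩
  have hpmsum : ∀ (s0 : S) (a0 : A), Summable (fun t : ℕ =>
      γ ^ t * ∑ s, ∑ a, (stepDist P πstar)^[t] (pointMass s0 a0) s a * Rbar s a) :=
    fun s0 a0 => Summable.of_nonneg_of_le (fun t => (hpm s0 a0 t).1)
      (fun t => (hpm s0 a0 t).2) ((summable_geometric_of_lt_one hγ0 hγ1).mul_right Rmax)
  have hLHS : (∑ s, ∑ a, ν s a * Qpi P Rbar γ πstar s a) = ∑' t : ℕ, γ ^ t * r t := by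
    unfold Qpi
    have e1 : ∀ s0 a0, ν s0 a0 * (∑' t : ℕ, γ ^ t *
        ∑ s, ∑ a, (stepDist P πstar)^[t] (pointMass s0 a0) s a * Rbar s a)
        = ∑' t : ℕ, ν s0 a0 * (γ ^ t *
          ∑ s, ∑ a, (stepDist P πstar)^[t] (pointMass s0 a0) s a * Rbar s a) :=
      fun s0 a0 => (tsum_mul_left).symm
    simp_rw [e1]
    have e2 : ∀ s0 : S, (∑ a0, ∑' t : ℕ, ν s0 a0 * (γ ^ t *
        ∑ s, ∑ a, (stepDist P πstar)^[t] (pointMass s0 a0) s a * Rbar s a))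
        = ∑' t : ℕ, ∑ a0, ν s0 a0 * (γ ^ t *
          ∑ s, ∑ a, (stepDist P πstar)^[t] (pointMass s0 a0) s a * Rbar s a) :=
      fun s0 => (Summable.tsum_finsetSum fun a0 _ => (hpmsum s0 a0).mul_left _).symm
    simp_rw [e2]
    rw [← Summable.tsum_finsetSum (fun s0 _ => summable_sum fun a0 _ => (hpmsum s0 a0).mul_left _)]
    refine tsum_congr fun t => ?_
    rw [hrdef]
    simp only
    rw [exp_iterate_linear P πstar ν Rbar t, Finset.mul_sum]
    refine Finset.sum_congr rfl fun s0 _ => ?_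
    rw [Finset.mul_sum]
    exact Finset.sum_congr rfl fun a0 _ => by ring
  rw [hLHS, hkey, hgdef]
  simp
end

section
/- (Boundary-invariant FQI guarantee.) Under Assumptions 5.3 and 5.4, let f₁,...,f_k be the FQI iterates with per-iteration optimization error ε (L_μ(f_i; f_{i-1}) ≤ min_{f∈F} L_μ(f; f_{i-1}) + ε), let f* ∈ F satisfy ‖Bf* - f*‖_ν = 0 for all admissible ν, and let π̂ = π_{f_k} be the greedy policy of f_k. Then v^{π̂} ≥ v^{π_{f*}} - (2/(1-γ))·(√(Cε)/(1-γ) + γ^k V_max). -/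
open Finset

/-- Initial state-action distribution `d₁ = d₀ × π`. -/
noncomputable def initDist {S A : Type*} [DecidableEq A]
    (d0 : S → ℝ) (π : S → A) : S → A → ℝ :=
  fun s a => if a = π s then d0 s else 0

/-- `vpi` is the expected discounted return of policy `π` from `d₀`. -/
noncomputable def vpi {S A : Type*} [Fintype S] [Fintype A] [DecidableEq A]
    (P : S → A → S → ℝ) (Rbar : S → A → ℝ) (γ : ℝ) (d0 : S → ℝ) (π : S → A) : ℝ :=
  ∑' t : ℕ, γ ^ t * ∑ s, ∑ a, ((stepDist P π)^[t] (initDist d0 π)) s a * Rbar s a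

/-- Population squared loss of FQI: `Lfqi μ ρ rew P γ h f = L_μ(h; f)`. -/
noncomputable def Lfqi {S A Ω : Type*} [Fintype S] [Fintype A] [Nonempty A] [Fintype Ω]
    (μ : S → A → ℝ) (ρ : Ω → ℝ) (rew : S → A → Ω → ℝ)
    (P : S → A → S → ℝ) (γ : ℝ) (h f : S → A → ℝ) : ℝ :=
  ∑ s, ∑ a, ∑ ω, ∑ s', μ s a * ρ ω * P s a s' *
    (h s a - rew s a ω - γ * Finset.univ.sup' Finset.univ_nonempty (f s')) ^ 2

namespace Stmt19Aux
variable {S A : Type*} [Fintype S] [Fintype A]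

noncomputable def Eexp (ν g : S → A → ℝ) : ℝ := ∑ s, ∑ a, ν s a * g s a

lemma flat (h : S → A → ℝ) : ∑ p : S × A, h p.1 p.2 = ∑ s, ∑ a, h s a :=
  Fintype.sum_prod_type _

lemma Eexp_sub (ν f g : S → A → ℝ) :
    Eexp ν f - Eexp ν g = ∑ s, ∑ a, ν s a * (f s a - g s a) := by
  simp [Eexp, mul_sub, Finset.sum_sub_distrib]

lemma sq_Eexp_le (ν g : S → A → ℝ) (hν : ∀ s a, 0 ≤ ν s a)
    (hν1 : ∑ s, ∑ a, ν s a = 1) :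
    (Eexp ν g) ^ 2 ≤ ∑ s, ∑ a, ν s a * (g s a) ^ 2 := by
  have h := Finset.sum_mul_sq_le_sq_mul_sq Finset.univ
    (fun p : S × A => Real.sqrt (ν p.1 p.2))
    (fun p : S × A => Real.sqrt (ν p.1 p.2) * g p.1 p.2)
  have e1 : ∀ p : S × A, Real.sqrt (ν p.1 p.2) * (Real.sqrt (ν p.1 p.2) * g p.1 p.2)
      = ν p.1 p.2 * g p.1 p.2 := by
    intro p; rw [← mul_assoc, Real.mul_self_sqrt (hν _ _)]
  have e2 : ∀ p : S × A, (Real.sqrt (ν p.1 p.2)) ^ 2 = ν p.1 p.2 := by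
    intro p; rw [Real.sq_sqrt (hν _ _)]
  have e3 : ∀ p : S × A, (Real.sqrt (ν p.1 p.2) * g p.1 p.2) ^ 2
      = ν p.1 p.2 * (g p.1 p.2) ^ 2 := by
    intro p; rw [mul_pow, Real.sq_sqrt (hν _ _)]
  simp only [e1, e2, e3] at h
  have m1 : (∑ p : S × A, ν p.1 p.2) = 1 := by rw [flat (fun s a => ν s a)]; exact hν1
  have e4 : (Eexp ν g) = ∑ p : S × A, ν p.1 p.2 * g p.1 p.2 :=
    (flat (fun s a => ν s a * g s a)).symm
  have e5 : (∑ p : S × A, ν p.1 p.2 * (g p.1 p.2) ^ 2) = ∑ s, ∑ a, ν s a * (g s a) ^ 2 :=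
    flat (fun s a => ν s a * (g s a) ^ 2)
  rw [e4]
  calc (∑ p : S × A, ν p.1 p.2 * g p.1 p.2) ^ 2
      ≤ (∑ p : S × A, ν p.1 p.2) * ∑ p : S × A, ν p.1 p.2 * (g p.1 p.2) ^ 2 := h
    _ = ∑ s, ∑ a, ν s a * (g s a) ^ 2 := by rw [m1, one_mul, e5]

lemma abs_Eexp_le (ν g : S → A → ℝ) (M : ℝ) (hν : ∀ s a, 0 ≤ ν s a)
    (hν1 : ∑ s, ∑ a, ν s a = 1) (hM : ∀ s a, |g s a| ≤ M) :
    |Eexp ν g| ≤ M := by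
  calc |Eexp ν g| ≤ ∑ s, ∑ a, |ν s a * g s a| := by
        refine (Finset.abs_sum_le_sum_abs _ _).trans ?_
        exact Finset.sum_le_sum fun s _ => Finset.abs_sum_le_sum_abs _ _
    _ ≤ ∑ s, ∑ a, ν s a * M := by
        refine Finset.sum_le_sum fun s _ => Finset.sum_le_sum fun a _ => ?_
        rw [abs_mul, abs_of_nonneg (hν s a)]
        exact mul_le_mul_of_nonneg_left (hM s a) (hν s a)
    _ = M := by
        simp only [← Finset.sum_mul]
        rw [hν1, one_mul]

variable [DecidableEq A]

lemma Eexp_stepDist (P : S → A → S → ℝ) (π : S → A) (ν g : S → A → ℝ) :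
    Eexp (stepDist P π ν) g
      = ∑ s', (∑ s, ∑ a, ν s a * P s a s') * g s' (π s') := by
  unfold Eexp stepDist
  refine Finset.sum_congr rfl fun s' _ => ?_
  rw [Finset.sum_eq_single (π s')] <;> simp +contextual

lemma Eexp_initDist (d0 : S → ℝ) (π : S → A) (g : S → A → ℝ) :
    Eexp (initDist d0 π) g = ∑ s, d0 s * g s (π s) := by
  unfold Eexp initDist
  refine Finset.sum_congr rfl fun s _ => ?_
  rw [Finset.sum_eq_single (π s)] <;> simp +contextual

end Stmt19Aux

open Stmt19Aux

/-- Boundary-invariant guarantee for Fitted Q-Iteration (Theorem 5.6). -/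
theorem stmt19 {S A Ω : Type*} [Fintype S] [Fintype A] [Nonempty A] [DecidableEq A]
    [Fintype Ω]
    (d0 : S → ℝ) (hd0 : ∀ s, 0 ≤ d0 s) (hd01 : ∑ s, d0 s = 1)
    (μ : S → A → ℝ) (hμ : ∀ s a, 0 ≤ μ s a) (hμ1 : ∑ s, ∑ a, μ s a = 1)
    (ρ : Ω → ℝ) (hρ : ∀ ω, 0 ≤ ρ ω) (hρ1 : ∑ ω, ρ ω = 1)
    (Rmax Vmax : ℝ) (rew : S → A → Ω → ℝ)
    (hrew : ∀ s a ω, 0 ≤ rew s a ω ∧ rew s a ω ≤ Rmax)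
    (γ : ℝ) (hγ0 : 0 ≤ γ) (hγ1 : γ < 1)
    (hVmax : Vmax = Rmax / (1 - γ))
    (P : S → A → S → ℝ)
    (hP : ∀ s a, (∀ s', 0 ≤ P s a s') ∧ ∑ s', P s a s' = 1)
    -- expected reward
    (Rbar : S → A → ℝ) (hRbar : ∀ s a, Rbar s a = ∑ ω, ρ ω * rew s a ω)
    (F : Finset (S → A → ℝ))
    (hFrange : ∀ f ∈ F, ∀ s a, 0 ≤ f s a ∧ f s a ≤ Vmax)
    -- greedy-policy selector and joint-greedy policies π_{f,f'}
    (gre : (S → A → ℝ) → S → A)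
    (hgre : ∀ (f : S → A → ℝ) (s : S) (a : A), f s a ≤ f s (gre f s))
    (pm : (S → A → ℝ) → (S → A → ℝ) → S → A)
    (hpm : ∀ (f f' : S → A → ℝ) (s : S) (a : A),
      max (f s a) (f' s a) ≤ max (f s (pm f f' s)) (f' s (pm f f' s)))
    -- admissible distributions (Definition 5.1): occupancy measures of
    -- non-stationary policies built from {π_f : f ∈ F} ∪ {π_{f,f'} : f,f' ∈ F}
    (Adm : Set (S → A → ℝ))
    (hAdm : ∀ ν ∈ Adm, (∀ s a, 0 ≤ ν s a) ∧ ∑ s, ∑ a, ν s a = 1)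
    (hinit : ∀ f ∈ F, initDist d0 (gre f) ∈ Adm)
    (hinitpm : ∀ f ∈ F, ∀ f' ∈ F, initDist d0 (pm f f') ∈ Adm)
    (hstep : ∀ ν ∈ Adm, ∀ f ∈ F, stepDist P (gre f) ν ∈ Adm)
    (hsteppm : ∀ ν ∈ Adm, ∀ f ∈ F, ∀ f' ∈ F, stepDist P (pm f f') ν ∈ Adm)
    (hretarget : ∀ ν ∈ Adm, ∀ f ∈ F,
      (fun (s : S) (a : A) => if a = gre f s then ∑ a0, ν s a0 else 0) ∈ Adm)
    -- Assumption 5.3 (concentrability)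
    (C : ℝ) (hC : 0 < C)
    (hconc : ∀ ν ∈ Adm, ∀ f ∈ F, ∀ f' ∈ F,
      (∑ s, ∑ a, ν s a * (f s a - f' s a) ^ 2)
        ≤ C * ∑ s, ∑ a, μ s a * (f s a - f' s a) ^ 2)
    -- Assumption 5.4 (the operator B)
    (B : (S → A → ℝ) → (S → A → ℝ)) (hBF : ∀ f ∈ F, B f ∈ F)
    (hBvalid : ∀ f ∈ F, ∀ ν ∈ Adm,
      (∑ s, ∑ a, ν s a * B f s a)
        = ∑ s, ∑ a, ∑ ω, ∑ s1, ν s a * ρ ω * P s a s1 *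
            (rew s a ω + γ * Finset.univ.sup' Finset.univ_nonempty (f s1)))
    (hBloss : ∀ f ∈ F, ∀ h ∈ F,
      Lfqi μ ρ rew P γ h f - Lfqi μ ρ rew P γ (B f) f
        = ∑ s, ∑ a, μ s a * (h s a - B f s a) ^ 2)
    -- the fixed point f*
    (fstar : S → A → ℝ) (hfstarF : fstar ∈ F)
    (hfix : ∀ ν ∈ Adm, ∑ s, ∑ a, ν s a * (B fstar s a - fstar s a) ^ 2 = 0)
    -- the FQI iterates with per-iteration optimization error ε
    (k : ℕ) (ε : ℝ) (hε : 0 ≤ ε)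
    (fseq : ℕ → (S → A → ℝ)) (hmem : ∀ i, fseq i ∈ F)
    (hopt : ∀ i, 1 ≤ i → i ≤ k → ∀ g ∈ F,
      Lfqi μ ρ rew P γ (fseq i) (fseq (i - 1))
        ≤ Lfqi μ ρ rew P γ g (fseq (i - 1)) + ε) :
    vpi P Rbar γ d0 (gre (fseq k))
      ≥ vpi P Rbar γ d0 (gre fstar)
        - (2 / (1 - γ)) * (Real.sqrt (C * ε) / (1 - γ) + γ ^ k * Vmax) := by
  classical
  have hSne : Nonempty S := by
    by_contra hS
    rw [not_nonempty_iff] at hS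
    rw [Finset.univ_eq_empty, Finset.sum_empty] at hd01
    exact zero_ne_one hd01
  have hΩne : Nonempty Ω := by
    by_contra hW
    rw [not_nonempty_iff] at hW
    rw [Finset.univ_eq_empty, Finset.sum_empty] at hρ1
    exact zero_ne_one hρ1
  have hRmax0 : 0 ≤ Rmax := by
    obtain ⟨s⟩ := hSne; obtain ⟨ω⟩ := hΩne
    obtain ⟨a⟩ := (inferInstance : Nonempty A)
    have := hrew s a ω; linarith [this.1, this.2]
  have h1γ : 0 < 1 - γ := by linarith
  have hVmax0 : 0 ≤ Vmax := by rw [hVmax]; positivity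
  have hRbarRange : ∀ s a, 0 ≤ Rbar s a ∧ Rbar s a ≤ Rmax := by
    intro s a
    rw [hRbar]
    constructor
    · exact Finset.sum_nonneg fun ω _ => mul_nonneg (hρ ω) (hrew s a ω).1
    · calc ∑ ω, ρ ω * rew s a ω ≤ ∑ ω, ρ ω * Rmax :=
            Finset.sum_le_sum fun ω _ =>
              mul_le_mul_of_nonneg_left (hrew s a ω).2 (hρ ω)
        _ = Rmax := by rw [← Finset.sum_mul, hρ1, one_mul]
  have hsup : ∀ (f : S → A → ℝ) (s : S),
      Finset.univ.sup' Finset.univ_nonempty (f s) = f s (gre f s) := by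
    intro f s
    exact le_antisymm (Finset.sup'_le _ _ fun a _ => hgre f s a)
      (Finset.le_sup' _ (Finset.mem_univ _))
  -- Bellman identity for B
  have hBell : ∀ f ∈ F, ∀ ν ∈ Adm, Eexp ν (B f)
      = Eexp ν Rbar + γ * Eexp (stepDist P (gre f) ν) f := by
    intro f hf ν hν
    have hv := hBvalid f hf ν hν
    have inner : ∀ s a, (∑ ω, ∑ s1, ν s a * ρ ω * P s a s1 *
          (rew s a ω + γ * Finset.univ.sup' Finset.univ_nonempty (f s1)))
        = ν s a * Rbar s a
          + γ * (ν s a * ∑ s1, P s a s1 * Finset.univ.sup' Finset.univ_nonempty (f s1)) := by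
      intro s a
      have step1 : ∀ ω, (∑ s1, ν s a * ρ ω * P s a s1 *
            (rew s a ω + γ * Finset.univ.sup' Finset.univ_nonempty (f s1)))
          = ν s a * ρ ω * rew s a ω
            + (ν s a * ρ ω * γ) * ∑ s1, P s a s1 * Finset.univ.sup' Finset.univ_nonempty (f s1) := by
        intro ω
        have e : ∀ s1, ν s a * ρ ω * P s a s1 *
              (rew s a ω + γ * Finset.univ.sup' Finset.univ_nonempty (f s1))
            = (ν s a * ρ ω * rew s a ω) * P s a s1
              + (ν s a * ρ ω * γ) * (P s a s1 * Finset.univ.sup' Finset.univ_nonempty (f s1)) := by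
          intro s1; ring
        rw [Finset.sum_congr rfl fun s1 _ => e s1, Finset.sum_add_distrib,
          ← Finset.mul_sum, ← Finset.mul_sum, (hP s a).2, mul_one]
      rw [Finset.sum_congr rfl fun ω _ => step1 ω, Finset.sum_add_distrib]
      congr 1
      · have e6 : ∀ ω, ν s a * ρ ω * rew s a ω = ν s a * (ρ ω * rew s a ω) := fun ω => by ring
        rw [Finset.sum_congr rfl fun ω _ => e6 ω, ← Finset.mul_sum, hRbar]
      · have h2 : ∀ ω : Ω, (ν s a * ρ ω * γ)
              * ∑ s1, P s a s1 * Finset.univ.sup' Finset.univ_nonempty (f s1)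
            = (ν s a * γ * ∑ s1, P s a s1 * Finset.univ.sup' Finset.univ_nonempty (f s1)) * ρ ω :=
          fun ω => by ring
        rw [Finset.sum_congr rfl fun ω _ => h2 ω, ← Finset.mul_sum, hρ1, mul_one]
        ring
    rw [show Eexp ν (B f) = ∑ s, ∑ a, ν s a * B f s a from rfl, hv,
      Finset.sum_congr rfl fun s _ => Finset.sum_congr rfl fun a _ => inner s a,
      Eexp_stepDist]
    have hUg : ∀ s1 : S, Finset.univ.sup' Finset.univ_nonempty (f s1) = f s1 (gre f s1) :=
      fun s1 => hsup f s1
    have c1 : ∀ (g : S → A → S → ℝ), ∑ s, ∑ a, ∑ s1, g s a s1 = ∑ s1, ∑ s, ∑ a, g s a s1 := by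
      intro g
      calc ∑ s, ∑ a, ∑ s1, g s a s1
          = ∑ s, ∑ s1, ∑ a, g s a s1 := Finset.sum_congr rfl fun s _ => Finset.sum_comm
        _ = ∑ s1, ∑ s, ∑ a, g s a s1 := Finset.sum_comm
    calc ∑ s, ∑ a, (ν s a * Rbar s a
            + γ * (ν s a * ∑ s1, P s a s1 * Finset.univ.sup' Finset.univ_nonempty (f s1)))
        = ∑ s, ∑ a, (ν s a * Rbar s a
            + ∑ s1, γ * (ν s a * P s a s1 * f s1 (gre f s1))) := by
          refine Finset.sum_congr rfl fun s _ => Finset.sum_congr rfl fun a _ => ?_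
          simp only [hUg]
          rw [Finset.mul_sum, Finset.mul_sum]
          exact congrArg _ (Finset.sum_congr rfl fun s1 _ => by ring)
      _ = (∑ s, ∑ a, ν s a * Rbar s a)
            + ∑ s, ∑ a, ∑ s1, γ * (ν s a * P s a s1 * f s1 (gre f s1)) := by
          simp only [Finset.sum_add_distrib]
      _ = (∑ s, ∑ a, ν s a * Rbar s a)
            + ∑ s1, ∑ s, ∑ a, γ * (ν s a * P s a s1 * f s1 (gre f s1)) := by
          rw [c1 (fun s a s1 => γ * (ν s a * P s a s1 * f s1 (gre f s1)))]
      _ = Eexp ν Rbar + γ * ∑ s1, (∑ s, ∑ a, ν s a * P s a s1) * f s1 (gre f s1) := by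
          have e7 : γ * ∑ s1, (∑ s, ∑ a, ν s a * P s a s1) * f s1 (gre f s1)
              = ∑ s1, ∑ s, ∑ a, γ * (ν s a * P s a s1 * f s1 (gre f s1)) := by
            rw [Finset.mul_sum]
            refine Finset.sum_congr rfl fun s1 _ => ?_
            rw [Finset.sum_mul, Finset.mul_sum]
            refine Finset.sum_congr rfl fun s _ => ?_
            rw [Finset.sum_mul, Finset.mul_sum]
          rw [e7]
          rfl
  -- Eexp of pointwise difference
  have Eexp_sub' : ∀ (ν f g : S → A → ℝ),
      Eexp ν (fun s a => f s a - g s a) = Eexp ν f - Eexp ν g := by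
    intro ν f g
    rw [Eexp_sub]
    rfl
  -- fixed point: expectations of B fstar and fstar agree on admissibles
  have hfixE : ∀ ν ∈ Adm, Eexp ν (B fstar) = Eexp ν fstar := by
    intro ν hν
    have h0 := hfix ν hν
    have h2 := sq_Eexp_le ν (fun s a => B fstar s a - fstar s a) (hAdm ν hν).1 (hAdm ν hν).2
    rw [h0] at h2
    have h3 : Eexp ν (fun s a => B fstar s a - fstar s a) = 0 := by nlinarith
    rw [Eexp_sub'] at h3
    linarith
  have hfstarBell : ∀ ν ∈ Adm,
      Eexp ν fstar = Eexp ν Rbar + γ * Eexp (stepDist P (gre fstar) ν) fstar := by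
    intro ν hν
    rw [← hfixE ν hν]
    exact hBell fstar hfstarF ν hν
  -- per-iteration error in μ-norm
  have hμerr : ∀ i, 1 ≤ i → i ≤ k →
      ∑ s, ∑ a, μ s a * (fseq i s a - B (fseq (i-1)) s a) ^ 2 ≤ ε := by
    intro i h1 h2
    have ho := hopt i h1 h2 (B (fseq (i-1))) (hBF _ (hmem _))
    have hb := hBloss (fseq (i-1)) (hmem _) (fseq i) (hmem i)
    linarith
  -- per-iteration error under any admissible distribution
  have hνerr : ∀ i, 1 ≤ i → i ≤ k → ∀ ν ∈ Adm,
      |Eexp ν (fun s a => fseq i s a - B (fseq (i-1)) s a)| ≤ Real.sqrt (C * ε) := by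
    intro i h1 h2 ν hν
    have hq := sq_Eexp_le ν (fun s a => fseq i s a - B (fseq (i-1)) s a)
      (hAdm ν hν).1 (hAdm ν hν).2
    have hc := hconc ν hν (fseq i) (hmem i) (B (fseq (i-1))) (hBF _ (hmem _))
    have hm := hμerr i h1 h2
    have hchain : (Eexp ν (fun s a => fseq i s a - B (fseq (i-1)) s a)) ^ 2 ≤ C * ε := by
      calc (Eexp ν (fun s a => fseq i s a - B (fseq (i-1)) s a)) ^ 2
          ≤ ∑ s, ∑ a, ν s a * (fseq i s a - B (fseq (i-1)) s a) ^ 2 := hq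
        _ ≤ C * ∑ s, ∑ a, μ s a * (fseq i s a - B (fseq (i-1)) s a) ^ 2 := hc
        _ ≤ C * ε := by exact mul_le_mul_of_nonneg_left hm hC.le
    calc |Eexp ν (fun s a => fseq i s a - B (fseq (i-1)) s a)|
        = Real.sqrt ((Eexp ν (fun s a => fseq i s a - B (fseq (i-1)) s a)) ^ 2) :=
          (Real.sqrt_sq_eq_abs _).symm
      _ ≤ Real.sqrt (C * ε) := Real.sqrt_le_sqrt hchain
  -- bounds via hFrange
  have habsF : ∀ f ∈ F, ∀ g ∈ F, ∀ (s : S) (a : A), |f s a - g s a| ≤ Vmax := by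
    intro f hf g hg s a
    have h1 := hFrange f hf s a
    have h2 := hFrange g hg s a
    rw [abs_le]
    constructor <;> linarith [h1.1, h1.2, h2.1, h2.2]
  -- error propagation
  have hprop : ∀ j, j ≤ k → ∀ ν ∈ Adm,
      |Eexp ν (fun s a => fseq j s a - fstar s a)|
        ≤ Real.sqrt (C * ε) * (∑ i ∈ Finset.range j, γ ^ i) + γ ^ j * Vmax := by
    intro j
    induction j with
    | zero =>
      intro _ ν hν
      simp only [Finset.range_zero, Finset.sum_empty, mul_zero, zero_add, pow_zero, one_mul]
      exact abs_Eexp_le ν _ Vmax (hAdm ν hν).1 (hAdm ν hν).2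
        (habsF (fseq 0) (hmem 0) fstar hfstarF)
    | succ j ih =>
      intro hjk ν hν
      have hj : j ≤ k := Nat.le_of_succ_le hjk
      have hν1A : stepDist P (gre (fseq j)) ν ∈ Adm := hstep ν hν (fseq j) (hmem j)
      have hν2A : stepDist P (gre fstar) ν ∈ Adm := hstep ν hν fstar hfstarF
      have ihn1 := ih hj (stepDist P (gre (fseq j)) ν) hν1A
      have ihn2 := ih hj (stepDist P (gre fstar) ν) hν2A
      have e0 : Eexp ν (fun s a => fseq (j+1) s a - fstar s a)
          = Eexp ν (fun s a => fseq (j+1) s a - B (fseq j) s a)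
            + (Eexp ν (B (fseq j)) - Eexp ν fstar) := by
        rw [Eexp_sub', Eexp_sub']
        ring
      have eB := hBell (fseq j) (hmem j) ν hν
      have eS := hfstarBell ν hν
      have hmpos : ∀ s' : S, 0 ≤ ∑ s, ∑ a, ν s a * P s a s' := by
        intro s'
        exact Finset.sum_nonneg fun s _ => Finset.sum_nonneg fun a _ =>
          mul_nonneg ((hAdm ν hν).1 s a) ((hP s a).1 s')
      -- upper and lower bounds on the shifted difference
      have hup : Eexp (stepDist P (gre (fseq j)) ν) (fseq j)
            - Eexp (stepDist P (gre fstar) ν) fstar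
          ≤ Eexp (stepDist P (gre (fseq j)) ν) (fun s a => fseq j s a - fstar s a) := by
        rw [Eexp_sub']
        have : Eexp (stepDist P (gre (fseq j)) ν) fstar
            ≤ Eexp (stepDist P (gre fstar) ν) fstar := by
          rw [Eexp_stepDist, Eexp_stepDist]
          refine Finset.sum_le_sum fun s' _ => ?_
          exact mul_le_mul_of_nonneg_left (hgre fstar s' (gre (fseq j) s')) (hmpos s')
        linarith
      have hlo : Eexp (stepDist P (gre fstar) ν) (fun s a => fseq j s a - fstar s a)
          ≤ Eexp (stepDist P (gre (fseq j)) ν) (fseq j)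
            - Eexp (stepDist P (gre fstar) ν) fstar := by
        rw [Eexp_sub']
        have : Eexp (stepDist P (gre fstar) ν) (fseq j)
            ≤ Eexp (stepDist P (gre (fseq j)) ν) (fseq j) := by
          rw [Eexp_stepDist, Eexp_stepDist]
          refine Finset.sum_le_sum fun s' _ => ?_
          exact mul_le_mul_of_nonneg_left (hgre (fseq j) s' (gre fstar s')) (hmpos s')
        linarith
      have herr := hνerr (j+1) (Nat.succ_le_succ (Nat.zero_le j)) hjk ν hν
      have herr' : |Eexp ν (fun s a => fseq (j+1) s a - B (fseq j) s a)|
          ≤ Real.sqrt (C * ε) := by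
        simpa using herr
      have habs : |Eexp ν (fun s a => fseq (j+1) s a - fstar s a)|
          ≤ Real.sqrt (C * ε)
            + γ * (Real.sqrt (C * ε) * (∑ i ∈ Finset.range j, γ ^ i) + γ ^ j * Vmax) := by
        rw [e0]
        refine (abs_add_le _ _).trans ?_
        have h4 : |Eexp ν (B (fseq j)) - Eexp ν fstar|
            ≤ γ * (Real.sqrt (C * ε) * (∑ i ∈ Finset.range j, γ ^ i) + γ ^ j * Vmax) := by
          rw [eB, eS]
          have e5 : Eexp ν Rbar + γ * Eexp (stepDist P (gre (fseq j)) ν) (fseq j)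
              - (Eexp ν Rbar + γ * Eexp (stepDist P (gre fstar) ν) fstar)
              = γ * (Eexp (stepDist P (gre (fseq j)) ν) (fseq j)
                  - Eexp (stepDist P (gre fstar) ν) fstar) := by ring
          rw [e5, abs_mul, abs_of_nonneg hγ0]
          refine mul_le_mul_of_nonneg_left ?_ hγ0
          rw [abs_le]
          constructor
          · calc -(Real.sqrt (C * ε) * (∑ i ∈ Finset.range j, γ ^ i) + γ ^ j * Vmax)
                ≤ Eexp (stepDist P (gre fstar) ν) (fun s a => fseq j s a - fstar s a) := by
                  have := (abs_le.mp ihn2).1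
                  linarith
              _ ≤ _ := hlo
          · calc Eexp (stepDist P (gre (fseq j)) ν) (fseq j)
                  - Eexp (stepDist P (gre fstar) ν) fstar
                ≤ Eexp (stepDist P (gre (fseq j)) ν) (fun s a => fseq j s a - fstar s a) := hup
              _ ≤ Real.sqrt (C * ε) * (∑ i ∈ Finset.range j, γ ^ i) + γ ^ j * Vmax :=
                  (abs_le.mp ihn1).2
        exact add_le_add herr' h4
      refine habs.trans (le_of_eq ?_)
      rw [geom_sum_succ]
      ring
  -- final error bound
  set sqe := Real.sqrt (C * ε) with hsqe
  have hsqe0 : 0 ≤ sqe := Real.sqrt_nonneg _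
  set EE : ℝ := sqe / (1 - γ) + γ ^ k * Vmax with hEE
  have hEE0 : 0 ≤ EE := by
    rw [hEE]
    exact add_nonneg (div_nonneg hsqe0 h1γ.le) (mul_nonneg (pow_nonneg hγ0 k) hVmax0)
  have hpropk : ∀ ν ∈ Adm, |Eexp ν (fun s a => fseq k s a - fstar s a)| ≤ EE := by
    intro ν hν
    refine (hprop k le_rfl ν hν).trans ?_
    have hgs : ∑ i ∈ Finset.range k, γ ^ i ≤ 1 / (1 - γ) := by
      rw [geom_sum_eq (by intro h; rw [h] at hγ1; exact lt_irrefl 1 hγ1 : γ ≠ 1) k,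
        show (γ ^ k - 1) / (γ - 1) = (1 - γ ^ k) / (1 - γ) from by
          rw [div_eq_div_iff (by linarith) (by linarith)]; ring]
      have hp : (0:ℝ) ≤ γ ^ k := pow_nonneg hγ0 k
      gcongr
      linarith
    have h15 := mul_le_mul_of_nonneg_left hgs hsqe0
    rw [hEE]
    calc sqe * (∑ i ∈ Finset.range k, γ ^ i) + γ ^ k * Vmax
        ≤ sqe * (1 / (1 - γ)) + γ ^ k * Vmax := by linarith
      _ = sqe / (1 - γ) + γ ^ k * Vmax := by ring
  -- one-step performance difference bounds
  have hΔ : ∀ ν ∈ Adm,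
      -(2 * EE) ≤ Eexp (stepDist P (gre (fseq k)) ν) fstar
        - Eexp (stepDist P (gre fstar) ν) fstar := by
    intro ν hν
    have h1A : stepDist P (gre (fseq k)) ν ∈ Adm := hstep ν hν (fseq k) (hmem k)
    have h2A : stepDist P (gre fstar) ν ∈ Adm := hstep ν hν fstar hfstarF
    have b1 := (abs_le.mp (hpropk _ h1A)).2
    have b2 := (abs_le.mp (hpropk _ h2A)).1
    have hmpos : ∀ s' : S, 0 ≤ ∑ s, ∑ a, ν s a * P s a s' := fun s' =>
      Finset.sum_nonneg fun s _ => Finset.sum_nonneg fun a _ =>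
        mul_nonneg ((hAdm ν hν).1 s a) ((hP s a).1 s')
    have hmid : Eexp (stepDist P (gre fstar) ν) (fseq k)
        ≤ Eexp (stepDist P (gre (fseq k)) ν) (fseq k) := by
      rw [Eexp_stepDist, Eexp_stepDist]
      exact Finset.sum_le_sum fun s' _ =>
        mul_le_mul_of_nonneg_left (hgre (fseq k) s' (gre fstar s')) (hmpos s')
    have e1 := Eexp_sub' (stepDist P (gre (fseq k)) ν) (fseq k) fstar
    have e2 := Eexp_sub' (stepDist P (gre fstar) ν) (fseq k) fstar
    linarith
  have hΔ0 : -(2 * EE) ≤ Eexp (initDist d0 (gre (fseq k))) fstar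
      - Eexp (initDist d0 (gre fstar)) fstar := by
    have h1A : initDist d0 (gre (fseq k)) ∈ Adm := hinit (fseq k) (hmem k)
    have h2A : initDist d0 (gre fstar) ∈ Adm := hinit fstar hfstarF
    have b1 := (abs_le.mp (hpropk _ h1A)).2
    have b2 := (abs_le.mp (hpropk _ h2A)).1
    have hmid : Eexp (initDist d0 (gre fstar)) (fseq k)
        ≤ Eexp (initDist d0 (gre (fseq k))) (fseq k) := by
      rw [Eexp_initDist, Eexp_initDist]
      exact Finset.sum_le_sum fun s _ =>
        mul_le_mul_of_nonneg_left (hgre (fseq k) s (gre fstar s)) (hd0 s)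
    have e1 := Eexp_sub' (initDist d0 (gre (fseq k))) (fseq k) fstar
    have e2 := Eexp_sub' (initDist d0 (gre fstar)) (fseq k) fstar
    linarith
  -- occupancy sequences
  have hνAdm : ∀ t : ℕ,
      (stepDist P (gre (fseq k)))^[t] (initDist d0 (gre (fseq k))) ∈ Adm := by
    intro t
    induction t with
    | zero => exact hinit (fseq k) (hmem k)
    | succ t ih => rw [Function.iterate_succ_apply']; exact hstep _ ih (fseq k) (hmem k)
  have hμAdm : ∀ t : ℕ,
      (stepDist P (gre fstar))^[t] (initDist d0 (gre fstar)) ∈ Adm := by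
    intro t
    induction t with
    | zero => exact hinit fstar hfstarF
    | succ t ih => rw [Function.iterate_succ_apply']; exact hstep _ ih fstar hfstarF
  have hbdf : ∀ ν ∈ Adm, |Eexp ν fstar| ≤ Vmax := by
    intro ν hν
    refine abs_Eexp_le ν _ Vmax (hAdm ν hν).1 (hAdm ν hν).2 fun s a => ?_
    have := hFrange fstar hfstarF s a
    rw [abs_le]; constructor <;> linarith [this.1, this.2]
  have hbdR : ∀ ν ∈ Adm, |Eexp ν Rbar| ≤ Rmax := by
    intro ν hν
    refine abs_Eexp_le ν _ Rmax (hAdm ν hν).1 (hAdm ν hν).2 fun s a => ?_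
    have := hRbarRange s a
    rw [abs_le]; constructor <;> linarith [this.1, this.2]
  set w : ℕ → ℝ := fun t =>
    γ ^ t * Eexp ((stepDist P (gre (fseq k)))^[t] (initDist d0 (gre (fseq k)))) fstar with hw
  set u : ℕ → ℝ := fun t =>
    γ ^ t * Eexp ((stepDist P (gre fstar))^[t] (initDist d0 (gre fstar))) fstar with hu
  set c : ℕ → ℝ := fun t => γ ^ (t+1) *
    Eexp (stepDist P (gre fstar) ((stepDist P (gre (fseq k)))^[t] (initDist d0 (gre (fseq k))))) fstar with hc
  have hsummable : ∀ (x : ℕ → ℝ) (K : ℝ), (∀ t, |x t| ≤ γ ^ t * K) → Summable x := by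
    intro x K hx
    have hgK : Summable (fun t : ℕ => γ ^ t * K) :=
      (summable_geometric_of_lt_one hγ0 hγ1).mul_right K
    rw [← summable_abs_iff]
    exact Summable.of_nonneg_of_le (fun t => abs_nonneg _) hx hgK
  have habs_gen : ∀ (x : ℝ) (t : ℕ) (M : ℝ), |x| ≤ M → |γ ^ t * x| ≤ γ ^ t * M := by
    intro x t M hx
    rw [abs_mul, abs_of_nonneg (pow_nonneg hγ0 t)]
    exact mul_le_mul_of_nonneg_left hx (pow_nonneg hγ0 t)
  have hbw : ∀ t, |w t| ≤ γ ^ t * Vmax := fun t => habs_gen _ t _ (hbdf _ (hνAdm t))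
  have hbu2 : ∀ t, |u t| ≤ γ ^ t * Vmax := fun t => habs_gen _ t _ (hbdf _ (hμAdm t))
  have hbc : ∀ t, |c t| ≤ γ ^ t * (γ * Vmax) := by
    intro t
    have h16 : stepDist P (gre fstar) ((stepDist P (gre (fseq k)))^[t] (initDist d0 (gre (fseq k)))) ∈ Adm :=
      hstep _ (hνAdm t) fstar hfstarF
    have h17 := habs_gen _ (t+1) _ (hbdf _ h16)
    calc |c t| ≤ γ ^ (t+1) * Vmax := h17
      _ = γ ^ t * (γ * Vmax) := by rw [pow_succ]; ring
  have hsw : Summable w := hsummable w Vmax hbw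
  have hsu : Summable u := hsummable u Vmax hbu2
  have hsc : Summable c := hsummable c (γ * Vmax) hbc
  have hsw1 : Summable (fun t => w (t+1)) := (summable_nat_add_iff 1).2 hsw
  -- Bellman expansions of the two values
  have haw : ∀ t : ℕ,
      γ ^ t * Eexp ((stepDist P (gre (fseq k)))^[t] (initDist d0 (gre (fseq k)))) Rbar
        = w t - c t := by
    intro t
    have h18 := hfstarBell _ (hνAdm t)
    have h18' : Eexp ((stepDist P (gre (fseq k)))^[t] (initDist d0 (gre (fseq k)))) Rbar
        = Eexp ((stepDist P (gre (fseq k)))^[t] (initDist d0 (gre (fseq k)))) fstar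
          - γ * Eexp (stepDist P (gre fstar)
              ((stepDist P (gre (fseq k)))^[t] (initDist d0 (gre (fseq k))))) fstar := by
      linarith
    rw [hw, hc]
    simp only []
    rw [h18']
    ring
  have hbu3 : ∀ t : ℕ,
      γ ^ t * Eexp ((stepDist P (gre fstar))^[t] (initDist d0 (gre fstar))) Rbar
        = u t - u (t+1) := by
    intro t
    have h19 := hfstarBell _ (hμAdm t)
    have h20 : stepDist P (gre fstar) ((stepDist P (gre fstar))^[t] (initDist d0 (gre fstar)))
        = (stepDist P (gre fstar))^[t+1] (initDist d0 (gre fstar)) :=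
      (Function.iterate_succ_apply' _ _ _).symm
    rw [h20] at h19
    have h19' : Eexp ((stepDist P (gre fstar))^[t] (initDist d0 (gre fstar))) Rbar
        = Eexp ((stepDist P (gre fstar))^[t] (initDist d0 (gre fstar))) fstar
          - γ * Eexp ((stepDist P (gre fstar))^[t+1] (initDist d0 (gre fstar))) fstar := by
      linarith
    rw [hu]
    simp only []
    rw [h19']
    ring
  have hulim : Filter.Tendsto u Filter.atTop (nhds 0) := by
    apply squeeze_zero_norm hbu2
    have := (tendsto_pow_atTop_nhds_zero_of_lt_one hγ0 hγ1).mul_const Vmax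
    simpa using this
  have hvh : vpi P Rbar γ d0 (gre (fseq k))
      = ∑' t : ℕ, γ ^ t * Eexp ((stepDist P (gre (fseq k)))^[t] (initDist d0 (gre (fseq k)))) Rbar := rfl
  have hvs : vpi P Rbar γ d0 (gre fstar)
      = ∑' t : ℕ, γ ^ t * Eexp ((stepDist P (gre fstar))^[t] (initDist d0 (gre fstar))) Rbar := rfl
  -- value of the comparator policy
  have hsb : Summable (fun t : ℕ =>
      γ ^ t * Eexp ((stepDist P (gre fstar))^[t] (initDist d0 (gre fstar))) Rbar) :=
    hsummable _ Rmax (fun t => habs_gen _ t _ (hbdR _ (hμAdm t)))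
  have hvs2 : vpi P Rbar γ d0 (gre fstar) = u 0 := by
    rw [hvs]
    have h7 : ∀ n : ℕ, ∑ t ∈ Finset.range n,
        γ ^ t * Eexp ((stepDist P (gre fstar))^[t] (initDist d0 (gre fstar))) Rbar = u 0 - u n := by
      intro n
      rw [Finset.sum_congr rfl fun t _ => hbu3 t]
      exact Finset.sum_range_sub' u n
    have h8 := hsb.hasSum.tendsto_sum_nat
    have h9 : Filter.Tendsto (fun n => ∑ t ∈ Finset.range n,
        γ ^ t * Eexp ((stepDist P (gre fstar))^[t] (initDist d0 (gre fstar))) Rbar)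
        Filter.atTop (nhds (u 0 - 0)) := by
      simp only [h7]
      exact Filter.Tendsto.sub tendsto_const_nhds hulim
    have h10 := tendsto_nhds_unique h8 h9
    rw [h10, sub_zero]
  -- value of the learned policy
  have hvh2 : vpi P Rbar γ d0 (gre (fseq k)) = w 0 + ∑' t : ℕ, (w (t+1) - c t) := by
    rw [hvh, tsum_congr haw, Summable.tsum_sub hsw hsc, Summable.tsum_eq_zero_add hsw, Summable.tsum_sub hsw1 hsc]
    ring
  -- bound the series
  have hstepbd : ∀ t : ℕ, γ ^ (t+1) * (-(2 * EE)) ≤ w (t+1) - c t := by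
    intro t
    have h10 := hΔ _ (hνAdm t)
    have h11 : w (t+1) = γ ^ (t+1) *
        Eexp (stepDist P (gre (fseq k)) ((stepDist P (gre (fseq k)))^[t] (initDist d0 (gre (fseq k))))) fstar := by
      rw [hw]
      simp only []
      rw [Function.iterate_succ_apply']
    have h12 := mul_le_mul_of_nonneg_left h10 (pow_nonneg hγ0 (t+1))
    have h21 : γ ^ (t+1) * (Eexp (stepDist P (gre (fseq k))
          ((stepDist P (gre (fseq k)))^[t] (initDist d0 (gre (fseq k))))) fstar
        - Eexp (stepDist P (gre fstar)
          ((stepDist P (gre (fseq k)))^[t] (initDist d0 (gre (fseq k))))) fstar)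
        = γ ^ (t+1) * Eexp (stepDist P (gre (fseq k))
            ((stepDist P (gre (fseq k)))^[t] (initDist d0 (gre (fseq k))))) fstar
          - γ ^ (t+1) * Eexp (stepDist P (gre fstar)
            ((stepDist P (gre (fseq k)))^[t] (initDist d0 (gre (fseq k))))) fstar := by ring
    rw [h11, hc]
    simp only []
    linarith [h12, h21]
  have hsum_lhs : Summable (fun t : ℕ => γ ^ (t+1) * (-(2 * EE))) := by
    refine hsummable _ (2 * EE) fun t => ?_
    rw [abs_mul, abs_of_nonneg (pow_nonneg hγ0 (t+1)), abs_neg, abs_of_nonneg (by linarith)]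
    calc γ ^ (t+1) * (2 * EE) ≤ γ ^ t * (2 * EE) := by
          have : γ ^ (t+1) ≤ γ ^ t := pow_le_pow_of_le_one hγ0 hγ1.le (Nat.le_succ t)
          exact mul_le_mul_of_nonneg_right this (by linarith)
      _ = γ ^ t * (2 * EE) := rfl
  have hsum_rhs : Summable (fun t => w (t+1) - c t) := hsw1.sub hsc
  have h12 : ∑' t : ℕ, γ ^ (t+1) * (-(2 * EE)) ≤ ∑' t : ℕ, (w (t+1) - c t) :=
    Summable.tsum_le_tsum hstepbd hsum_lhs hsum_rhs
  have h13 : ∑' t : ℕ, γ ^ (t+1) * (-(2 * EE)) = γ / (1 - γ) * (-(2 * EE)) := by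
    have h14 : ∀ t : ℕ, γ ^ (t+1) * (-(2 * EE)) = γ ^ t * (γ * (-(2 * EE))) := fun t => by
      rw [pow_succ]; ring
    rw [tsum_congr h14, tsum_mul_right, tsum_geometric_of_lt_one hγ0 hγ1,
      div_eq_mul_inv]
    ring
  -- assemble
  have hw0 : w 0 = Eexp (initDist d0 (gre (fseq k))) fstar := by
    rw [hw]; simp
  have hu0 : u 0 = Eexp (initDist d0 (gre fstar)) fstar := by
    rw [hu]; simp
  have hkey : 2 / (1 - γ) * EE = 2 * EE + γ / (1 - γ) * (2 * EE) := by
    field_simp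
    ring
  rw [ge_iff_le, hvs2, hvh2]
  have hfinal : -(2 * EE) ≤ w 0 - u 0 := by rw [hw0, hu0]; exact hΔ0
  have hT : -(γ / (1 - γ) * (2 * EE)) ≤ ∑' t : ℕ, (w (t + 1) - c t) := by
    rw [show -(γ / (1 - γ) * (2 * EE)) = γ / (1 - γ) * (-(2 * EE)) from by ring, ← h13]
    exact h12
  calc u 0 - 2 / (1 - γ) * EE
      = u 0 + (-(2 * EE) + -(γ / (1 - γ) * (2 * EE))) := by rw [hkey]; ring
    _ ≤ u 0 + ((w 0 - u 0) + ∑' t : ℕ, (w (t + 1) - c t)) := by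
        exact add_le_add le_rfl (add_le_add hfinal hT)
    _ = w 0 + ∑' t : ℕ, (w (t + 1) - c t) := by ring
end
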